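/- arXiv:1510.08592 — 9 statements merged into one kernel-verified Lean document; each statement's English description precedes it below -/
import Mathlib

section
/- Let K, m, d be positive integers and let a_1 < a_2 < ⋯ < a_d be integers with 1 ≤ a_1 and a_d < K. Consider the original index coding problem with K messages and antidotes A_k = {k + a_1, k + a_2, …, k + a_d} ⊆ ZMod K for each k ∈ ZMod K, and the lifted problem with mK messages and antidotes A'_k = {k + iK : 1 ≤ i ≤ m−1} ∪ {k + a_j + iK : 1 ≤ j ≤ d, 0 ≤ i ≤ m−1} ⊆ ZMod (mK) for each k ∈ ZMod (mK). If C is a valid scalar linear index code of length l for the original problem, then the lifted code C^(m) = {t^(m) : t ∈ C} is a valid scalar linear index code of length l for the lifted problem. -/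
/-!
Lifting is precomposition with the reduction `π : ZMod (m * K) → ZMod K`, a linear map that is
injective because `π` is surjective. Since the fibre of `π` through `k` is `{k + i * K | i < m}`,
it sends `e_{π k}` to `e_k + e_{k+K} + ⋯ + e_{k+(m-1)K}`. Lifting a decoding of `e_{π k}` from `C`
and the `e_{π k + a_j}` therefore decodes that sum from `C^(m)` and the antidotes `e_{k+a_j+iK}`,
and the summands `e_{k+iK}` with `i ≥ 1` are antidotes of `k` as well.
-/

/-- Standard basis vector `e_j` of `V_n = ZMod n → GF(2)`. -/
def stdVec (n : ℕ) (j : ZMod n) : ZMod n → ZMod 2 := fun i => if i = j then 1 else 0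

/-- `C` is a valid scalar linear index code over `GF(2)` for the index coding problem
with `n` messages and antidote pattern `A`: it is a finite set of vectors such that
every standard basis vector `e_k` lies in the span of `C` together with the basis
vectors indexed by the antidote set `A k`. -/
def IsIndexCode (n : ℕ) (A : ZMod n → Set (ZMod n)) (C : Set (ZMod n → ZMod 2)) : Prop :=
  C.Finite ∧ ∀ k : ZMod n,
    stdVec n k ∈ Submodule.span (ZMod 2) (C ∪ (stdVec n '' A k))

/-- The lift `t^(m)` of a vector `t ∈ V_K`: `(t^(m))_j = t_{j mod K}`. -/
def liftVec (K m : ℕ) (t : ZMod K → ZMod 2) : ZMod (m * K) → ZMod 2 :=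
  fun j => t (ZMod.castHom (dvd_mul_left K m) (ZMod K) j)

/-- The lifted antidote pattern on `m*K` messages associated to `a : Fin d → ℕ`:
`A'_k = {k + i*K : 1 ≤ i ≤ m-1} ∪ {k + a j + i*K : j, 0 ≤ i ≤ m-1}`. -/
def liftedA (K m d : ℕ) (a : Fin d → ℕ) (k : ZMod (m * K)) : Set (ZMod (m * K)) :=
  {x | ∃ i : ℕ, 1 ≤ i ∧ i ≤ m - 1 ∧ x = k + (i * K : ℕ)} ∪
  {x | ∃ j : Fin d, ∃ i : ℕ, i ≤ m - 1 ∧ x = k + (a j : ℕ) + (i * K : ℕ)}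

section Lift

variable {K m : ℕ}

theorem liftVec_eq_funLeft :
    liftVec K m = LinearMap.funLeft (ZMod 2) (ZMod 2) (ZMod.castHom (dvd_mul_left K m) (ZMod K)) :=
  rfl

theorem liftVec_injective : Function.Injective (liftVec K m) :=
  (ZMod.ringHom_surjective (ZMod.castHom (dvd_mul_left K m) (ZMod K))).injective_comp_right

theorem liftVec_mem_span_image {S : Set (ZMod K → ZMod 2)} {t : ZMod K → ZMod 2}
    (ht : t ∈ Submodule.span (ZMod 2) S) :
    liftVec K m t ∈ Submodule.span (ZMod 2) (liftVec K m '' S) := by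
  rw [liftVec_eq_funLeft, Submodule.span_image]
  exact Submodule.mem_map_of_mem ht

theorem castHom_eq_castHom_iff (hK : 0 < K) (hm : 0 < m) (x y : ZMod (m * K)) :
    ZMod.castHom (dvd_mul_left K m) (ZMod K) x = ZMod.castHom (dvd_mul_left K m) (ZMod K) y ↔
      ∃ i < m, y + ((i * K : ℕ) : ZMod (m * K)) = x := by
  have : NeZero (m * K) := ⟨(Nat.mul_pos hm hK).ne'⟩
  constructor
  · intro h
    have hdvd : K ∣ (x - y).val := by
      rw [← ZMod.natCast_eq_zero_iff, ← map_natCast (ZMod.castHom (dvd_mul_left K m) (ZMod K)),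
        ZMod.natCast_zmod_val, map_sub, sub_eq_zero, h]
    obtain ⟨i, hi⟩ := hdvd
    refine ⟨i, ?_, ?_⟩
    · have := (x - y).val_lt
      rw [hi, mul_comm K] at this
      exact Nat.lt_of_mul_lt_mul_right this
    · rw [mul_comm i, ← hi, ZMod.natCast_zmod_val, add_sub_cancel]
  · rintro ⟨i, -, rfl⟩
    rw [map_add, map_natCast, (ZMod.natCast_eq_zero_iff _ K).mpr (dvd_mul_left K i), add_zero]

theorem injOn_add_natCast_mul (hK : 0 < K) (y : ZMod (m * K)) :
    Set.InjOn (fun i : ℕ => y + ((i * K : ℕ) : ZMod (m * K))) (Finset.range m) := by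
  intro i hi j hj hij
  simp only [Finset.coe_range, Set.mem_Iio] at hi hj
  have := (ZMod.natCast_eq_natCast_iff' _ _ (m * K)).mp (add_left_cancel hij)
  rw [Nat.mod_eq_of_lt (by nlinarith), Nat.mod_eq_of_lt (by nlinarith)] at this
  exact Nat.eq_of_mul_eq_mul_right hK this

theorem liftVec_stdVec (hK : 0 < K) (hm : 0 < m) (y : ZMod (m * K)) :
    liftVec K m (stdVec K (ZMod.castHom (dvd_mul_left K m) (ZMod K) y)) =
      ∑ i ∈ Finset.range m, stdVec (m * K) (y + ((i * K : ℕ) : ZMod (m * K))) := by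
  funext x
  have hsymm : ∀ z, stdVec (m * K) z x = if z = x then 1 else 0 := fun z => by
    simp only [stdVec, eq_comm]
  simp only [Finset.sum_apply, hsymm]
  rw [← Finset.sum_image (f := fun z => if z = x then (1 : ZMod 2) else 0)
    (injOn_add_natCast_mul hK y), Finset.sum_ite_eq']
  simp only [liftVec, stdVec, Finset.mem_image, Finset.mem_range, castHom_eq_castHom_iff hK hm]

theorem stdVec_eq_liftVec_sub (hK : 0 < K) (hm : 0 < m) (k : ZMod (m * K)) :
    stdVec (m * K) k = liftVec K m (stdVec K (ZMod.castHom (dvd_mul_left K m) (ZMod K) k)) -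
      ∑ i ∈ Finset.Ico 1 m, stdVec (m * K) (k + ((i * K : ℕ) : ZMod (m * K))) := by
  rw [eq_sub_iff_add_eq, liftVec_stdVec hK hm, Finset.range_eq_Ico,
    Finset.sum_eq_sum_Ico_succ_bot hm, zero_mul, Nat.cast_zero, add_zero]

theorem liftVec_stdVec_add_mem_span_liftedA (hK : 0 < K) (hm : 0 < m) {d : ℕ} (a : Fin d → ℕ)
    (k : ZMod (m * K)) (j : Fin d) :
    liftVec K m (stdVec K (ZMod.castHom (dvd_mul_left K m) (ZMod K) k + (a j : ℕ))) ∈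
      Submodule.span (ZMod 2) (stdVec (m * K) '' liftedA K m d a k) := by
  rw [← map_natCast (ZMod.castHom (dvd_mul_left K m) (ZMod K)), ← map_add, liftVec_stdVec hK hm]
  refine Submodule.sum_mem _ fun i hi => Submodule.subset_span ⟨_, Or.inr ⟨j, i, ?_, rfl⟩, rfl⟩
  exact Nat.le_sub_one_of_lt (Finset.mem_range.mp hi)

theorem isIndexCode_liftVec_image (hK : 0 < K) (hm : 0 < m) {d : ℕ} (a : Fin d → ℕ)
    {C : Set (ZMod K → ZMod 2)}
    (hC : IsIndexCode K (fun k => {x | ∃ j : Fin d, x = k + (a j : ℕ)}) C) :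
    IsIndexCode (m * K) (liftedA K m d a) (liftVec K m '' C) := by
  refine ⟨hC.1.image _, fun k => ?_⟩
  have hlift : liftVec K m (stdVec K (ZMod.castHom (dvd_mul_left K m) (ZMod K) k)) ∈
      Submodule.span (ZMod 2) (liftVec K m '' C ∪ stdVec (m * K) '' liftedA K m d a k) := by
    refine Submodule.span_le.mpr ?_ (liftVec_mem_span_image (hC.2 _))
    rintro _ ⟨t, ht | ⟨_, ⟨j, rfl⟩, rfl⟩, rfl⟩
    · exact Submodule.subset_span (Or.inl ⟨t, ht, rfl⟩)
    · exact Submodule.span_mono Set.subset_union_right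
        (liftVec_stdVec_add_mem_span_liftedA hK hm a k j)
  rw [stdVec_eq_liftVec_sub hK hm k]
  refine Submodule.sub_mem _ hlift (Submodule.sum_mem _ fun i hi => ?_)
  obtain ⟨hi1, him⟩ := Finset.mem_Ico.mp hi
  exact Submodule.subset_span (Or.inr ⟨_, Or.inl ⟨i, hi1, Nat.le_sub_one_of_lt him, rfl⟩, rfl⟩)

end Lift

theorem lifting_construction_general (K m d l : ℕ) (hK : 0 < K) (hm : 0 < m)
    (a : Fin d → ℕ)
    (C : Set (ZMod K → ZMod 2))
    (hC : IsIndexCode K (fun k => {x | ∃ j : Fin d, x = k + (a j : ℕ)}) C)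
    (hlen : C.ncard = l) :
    IsIndexCode (m * K) (liftedA K m d a) (liftVec K m '' C) ∧
      (liftVec K m '' C).ncard = l :=
  ⟨isIndexCode_liftVec_image hK hm a hC, hlen ▸ Set.ncard_image_of_injective C liftVec_injective⟩

/-- **Lifting construction (Theorem 1).** If `C` is a valid scalar linear index code of
length `l` for the problem with `K` messages and symmetric antidotes
`A_k = {k + a_1, …, k + a_d}`, then the lifted code `C^(m)` is a valid scalar linear
index code of length `l` for the lifted problem with `m*K` messages. -/
theorem lifting_construction (K m d l : ℕ) (hK : 0 < K) (hm : 0 < m) (hd : 0 < d)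
    (a : Fin d → ℕ) (ha : StrictMono a)
    (ha1 : 1 ≤ a ⟨0, hd⟩) (had : a ⟨d - 1, Nat.sub_lt hd Nat.one_pos⟩ < K)
    (C : Set (ZMod K → ZMod 2))
    (hC : IsIndexCode K (fun k => {x | ∃ j : Fin d, x = k + (a j : ℕ)}) C)
    (hlen : C.ncard = l) :
    IsIndexCode (m * K) (liftedA K m d a) (liftVec K m '' C) ∧
      (liftVec K m '' C).ncard = l :=
  lifting_construction_general K m d l hK hm a C hC hlen
end

section
/- Let K, m, d be positive integers and let a_1 < a_2 < ⋯ < a_d be integers with 1 ≤ a_1 and a_d < K, and for k ∈ ZMod (mK) let A'_k = {k + iK : 1 ≤ i ≤ m−1} ∪ {k + a_j + iK : 1 ≤ j ≤ d, 0 ≤ i ≤ m−1} ⊆ ZMod (mK) be the lifted antidote pattern. Then for every k ∈ ZMod (mK) and every integer j with 0 ≤ j ≤ m−1, one has the set identity A'_{k+jK} = (A'_k ∪ {k}) \ {k + jK}. -/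
/-- `(k + ⟨K⟩) ∪ ⋃ l, (k + a l + ⟨K⟩)`, with `⟨K⟩` the subgroup of multiples of `K`. -/
def liftedCosets (K m d : ℕ) (a : Fin d → ℕ) (k : ZMod (m * K)) : Set (ZMod (m * K)) :=
  {x | ∃ i : ℕ, x = k + (i * K : ℕ)} ∪
  {x | ∃ l : Fin d, ∃ i : ℕ, x = k + (a l : ℕ) + (i * K : ℕ)}

section

variable {K m d : ℕ} {a : Fin d → ℕ}

theorem natCast_mul_eq_natCast_mod_mul (n : ℕ) :
    ((n * K : ℕ) : ZMod (m * K)) = ((n % m * K : ℕ) : ZMod (m * K)) := by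
  have hmK : ((m * K : ℕ) : ZMod (m * K)) = 0 := ZMod.natCast_self _
  conv_lhs => rw [← Nat.mod_add_div n m]
  push_cast at hmK ⊢
  linear_combination ((n / m : ℕ) : ZMod (m * K)) * hmK

theorem exists_natCast_mul_add_eq (hm : 0 < m) (j i : ℕ) :
    ∃ i' : ℕ, ((j * K : ℕ) : ZMod (m * K)) + ((i' * K : ℕ) : ZMod (m * K)) =
      ((i * K : ℕ) : ZMod (m * K)) := by
  have hmK : ((m * K : ℕ) : ZMod (m * K)) = 0 := ZMod.natCast_self _
  refine ⟨i + (m - 1) * j, ?_⟩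
  push_cast [Nat.cast_pred hm] at hmK ⊢
  linear_combination (j : ZMod (m * K)) * hmK

theorem liftedCosets_add_natCast_mul (hm : 0 < m) (k : ZMod (m * K)) (j : ℕ) :
    liftedCosets K m d a (k + (j * K : ℕ)) = liftedCosets K m d a k := by
  ext x
  simp only [liftedCosets, Set.mem_union, Set.mem_ofPred_eq]
  constructor
  · rintro (⟨i, rfl⟩ | ⟨l, i, rfl⟩)
    · exact Or.inl ⟨j + i, by push_cast; ring⟩
    · exact Or.inr ⟨l, j + i, by push_cast; ring⟩
  · rintro (⟨i, rfl⟩ | ⟨l, i, rfl⟩) <;> obtain ⟨i', hi'⟩ := exists_natCast_mul_add_eq hm j i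
    · exact Or.inl ⟨i', by linear_combination -hi'⟩
    · exact Or.inr ⟨l, i', by linear_combination -hi'⟩

theorem liftedA_union_singleton (hm : 0 < m) (k : ZMod (m * K)) :
    liftedA K m d a k ∪ {k} = liftedCosets K m d a k := by
  ext x
  simp only [liftedA, liftedCosets, Set.mem_union, Set.mem_ofPred_eq, Set.mem_singleton_iff]
  constructor
  · rintro ((⟨i, -, -, rfl⟩ | ⟨l, i, -, rfl⟩) | rfl)
    · exact Or.inl ⟨i, rfl⟩
    · exact Or.inr ⟨l, i, rfl⟩
    · exact Or.inl ⟨0, by simp⟩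
  · have hlt : ∀ i, i % m ≤ m - 1 := fun i => Nat.le_pred_of_lt (Nat.mod_lt i hm)
    rintro (⟨i, rfl⟩ | ⟨l, i, rfl⟩) <;> rw [natCast_mul_eq_natCast_mod_mul]
    · rcases Nat.eq_zero_or_pos (i % m) with h0 | hpos
      · exact Or.inr (by simp [h0])
      · exact Or.inl (Or.inl ⟨i % m, hpos, hlt i, rfl⟩)
    · exact Or.inl (Or.inr ⟨l, i % m, hlt i, rfl⟩)

theorem self_notMem_liftedA (hK : 0 < K) (hm : 0 < m) (ha : ∀ l, 1 ≤ a l ∧ a l < K)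
    (k : ZMod (m * K)) : k ∉ liftedA K m d a k := by
  have natCast_ne_zero : ∀ n : ℕ, 0 < n → n < m * K → (n : ZMod (m * K)) ≠ 0 :=
    fun n hpos hlt h => hpos.ne' (Nat.eq_zero_of_dvd_of_lt ((ZMod.natCast_eq_zero_iff _ _).1 h) hlt)
  have hmK : (m - 1) * K + K = m * K := by
    rw [← Nat.succ_mul, Nat.succ_eq_add_one, Nat.sub_add_cancel hm]
  rintro (⟨i, hi1, him, h⟩ | ⟨l, i, him, h⟩)
  · refine natCast_ne_zero (i * K) (Nat.mul_pos hi1 hK) ?_ (by simpa using h.symm)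
    nlinarith
  · refine natCast_ne_zero (a l + i * K) (by have := (ha l).1; omega) ?_ ?_
    · have := (ha l).2
      nlinarith
    · rw [add_assoc] at h
      push_cast at h ⊢
      simpa using h.symm

theorem liftedA_eq_liftedCosets_diff (hK : 0 < K) (hm : 0 < m) (ha : ∀ l, 1 ≤ a l ∧ a l < K)
    (k : ZMod (m * K)) : liftedA K m d a k = liftedCosets K m d a k \ {k} := by
  rw [← liftedA_union_singleton hm, Set.union_singleton,
    Set.insert_sdiff_self_of_notMem (self_notMem_liftedA hK hm ha k)]

end

/-- **Antidote structure identity (equation (7) of the paper).** For the lifted antidote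
pattern, `A'_{k+jK} = (A'_k ∪ {k}) \ {k + jK}` for every `0 ≤ j ≤ m-1`. -/
theorem lifted_antidote_structure (K m d : ℕ) (hK : 0 < K) (hm : 0 < m) (hd : 0 < d)
    (a : Fin d → ℕ) (ha : StrictMono a)
    (ha1 : 1 ≤ a ⟨0, hd⟩) (had : a ⟨d - 1, Nat.sub_lt hd Nat.one_pos⟩ < K) :
    ∀ (k : ZMod (m * K)) (j : ℕ), j ≤ m - 1 →
      liftedA K m d a (k + (j * K : ℕ)) =
        (liftedA K m d a k ∪ {k}) \ {k + ((j * K : ℕ) : ZMod (m * K))} := by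
  intro k j _
  have ha_bounds : ∀ l, 1 ≤ a l ∧ a l < K := fun l =>
    ⟨ha1.trans (ha.monotone (Fin.le_def.2 (Nat.zero_le _))),
      (ha.monotone (Fin.le_def.2 (Nat.le_sub_one_of_lt l.isLt))).trans_lt had⟩
  rw [liftedA_union_singleton hm, liftedA_eq_liftedCosets_diff hK hm ha_bounds,
    liftedCosets_add_natCast_mul hm]
end

section
/- Let K, d be positive integers and let a_1 < a_2 < ⋯ < a_d be integers with 1 ≤ a_1 and a_d < K, and consider the index coding problem with K messages and antidotes A_k = {k + a_1, …, k + a_d} ⊆ ZMod K. Then every valid scalar linear index code for this problem has length at least K − a_d. -/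
/-!
Call `T = {k | K - a_d ≤ k}` the top messages. A receiver `k` outside `T` has side information
`k + a_1, …, k + a_d`, which do not wrap around modulo `K` and all exceed `k`; so, by downward
induction on `k`, the code `C` together with the basis vectors of `T` spans all of `GF(2)^K`.
Comparing dimensions gives `K ≤ |C| + |T| = |C| + a_d`.
-/

theorem finrank_le_ncard_of_span_eq_top {R M : Type*} [Ring R] [StrongRankCondition R]
    [AddCommGroup M] [Module R M] {X : Set M} (hX : X.Finite)
    (hspan : Submodule.span R X = ⊤) : Module.finrank R M ≤ X.ncard := by
  have := hX.fintype
  have h := finrank_span_le_card (R := R) X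
  rwa [hspan, finrank_top, ← Set.ncard_eq_toFinset_card'] at h

theorem stdVec_eq_pi_single (n : ℕ) (j : ZMod n) : stdVec n j = Pi.single j 1 := by
  funext i
  simp [stdVec, Pi.single_apply]

theorem span_eq_top_of_stdVec_mem (n : ℕ) [NeZero n] {X : Set (ZMod n → ZMod 2)}
    (h : ∀ k, stdVec n k ∈ Submodule.span (ZMod 2) X) : Submodule.span (ZMod 2) X = ⊤ := by
  rw [eq_top_iff, ← (Pi.basisFun (ZMod 2) (ZMod n)).span_eq, Submodule.span_le]
  rintro _ ⟨k, rfl⟩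
  simpa [stdVec_eq_pi_single] using h k

namespace IsIndexCode

variable {n : ℕ} {A : ZMod n → Set (ZMod n)} {C : Set (ZMod n → ZMod 2)}

theorem stdVec_mem_span_of_descent (hC : IsIndexCode n A C) (T : Set (ZMod n))
    (f : ZMod n → ℕ) (hf : ∀ k ∉ T, ∀ j ∈ A k, f j < f k) (k : ZMod n) :
    stdVec n k ∈ Submodule.span (ZMod 2) (C ∪ stdVec n '' T) := by
  induction k using (measure f).wf.induction with
  | h k ih =>
    by_cases hk : k ∈ T
    · exact Submodule.subset_span (Or.inr ⟨k, hk, rfl⟩)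
    refine Submodule.span_le.mpr ?_ (hC.2 k)
    rintro x (hx | ⟨j, hj, rfl⟩)
    · exact Submodule.subset_span (Or.inl hx)
    · exact ih j (hf k hk j hj)

theorem le_ncard_add_ncard_of_descent [NeZero n] (hC : IsIndexCode n A C) (T : Set (ZMod n))
    (f : ZMod n → ℕ) (hf : ∀ k ∉ T, ∀ j ∈ A k, f j < f k) : n ≤ C.ncard + T.ncard :=
  calc n = Module.finrank (ZMod 2) (ZMod n → ZMod 2) := by simp
    _ ≤ (C ∪ stdVec n '' T).ncard :=
      finrank_le_ncard_of_span_eq_top (hC.1.union (Set.toFinite _))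
        (span_eq_top_of_stdVec_mem n (hC.stdVec_mem_span_of_descent T f hf))
    _ ≤ C.ncard + (stdVec n '' T).ncard := Set.ncard_union_le _ _
    _ ≤ C.ncard + T.ncard := by gcongr; exact Set.ncard_image_le (Set.toFinite T)

end IsIndexCode

theorem ZMod.ncard_setOf_sub_le_val (n m : ℕ) [NeZero n] :
    {x : ZMod n | n - m ≤ x.val}.ncard ≤ m := by
  calc {x : ZMod n | n - m ≤ x.val}.ncard ≤ (Set.Ico (n - m) n).ncard :=
        Set.ncard_le_ncard_of_injOn ZMod.val (fun x hx => ⟨hx, x.val_lt⟩)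
          (ZMod.val_injective n).injOn
    _ ≤ m := by rw [Set.ncard_Ico_nat]; omega

theorem index_code_length_lower_bound_general (K d : ℕ) (hd : 0 < d)
    (a : Fin d → ℕ) (ha : StrictMono a)
    (ha1 : 1 ≤ a ⟨0, hd⟩)
    (C : Set (ZMod K → ZMod 2))
    (hC : IsIndexCode K (fun k => {x | ∃ j : Fin d, x = k + (a j : ℕ)}) C) :
    K - a ⟨d - 1, Nat.sub_lt hd Nat.one_pos⟩ ≤ C.ncard := by
  set ad := a ⟨d - 1, Nat.sub_lt hd Nat.one_pos⟩
  rcases le_or_gt K ad with had | had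
  · omega
  have : NeZero K := ⟨by omega⟩
  have ha_bounds : ∀ j, 1 ≤ a j ∧ a j ≤ ad := fun j =>
    ⟨ha1.trans (ha.monotone (Fin.le_iff_val_le_val.2 (Nat.zero_le _))),
      ha.monotone (Fin.le_iff_val_le_val.2 (Nat.le_sub_one_of_lt j.isLt))⟩
  have hdescent : ∀ k ∉ {x : ZMod K | K - ad ≤ x.val},
      ∀ x ∈ {x | ∃ j : Fin d, x = k + (a j : ℕ)}, K - x.val < K - k.val := by
    rintro k hk _ ⟨j, rfl⟩
    have hk : k.val < K - ad := not_le.1 hk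
    obtain ⟨hj1, hjd⟩ := ha_bounds j
    rw [ZMod.val_add_of_lt (by rw [ZMod.val_natCast_of_lt (by omega)]; omega),
      ZMod.val_natCast_of_lt (by omega)]
    omega
  have hdim := hC.le_ncard_add_ncard_of_descent _ _ hdescent
  have htop := ZMod.ncard_setOf_sub_le_val K ad
  omega

/-- **Lower bound on the length.** Every valid scalar linear index code for the problem
with `K` messages and antidotes `A_k = {k + a_1, …, k + a_d}` has length at least
`K - a_d`. -/
theorem index_code_length_lower_bound (K d : ℕ) (hK : 0 < K) (hd : 0 < d)
    (a : Fin d → ℕ) (ha : StrictMono a)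
    (ha1 : 1 ≤ a ⟨0, hd⟩) (had : a ⟨d - 1, Nat.sub_lt hd Nat.one_pos⟩ < K)
    (C : Set (ZMod K → ZMod 2))
    (hC : IsIndexCode K (fun k => {x | ∃ j : Fin d, x = k + (a j : ℕ)}) C) :
    K - a ⟨d - 1, Nat.sub_lt hd Nat.one_pos⟩ ≤ C.ncard :=
  index_code_length_lower_bound_general K d hd a ha ha1 C hC
end

section
/- Let K, d be positive integers and let a_1 < a_2 < ⋯ < a_d be integers with 1 ≤ a_1 and a_d < K. Suppose C is a valid scalar linear index code of length exactly K − a_d for the problem with K messages and antidotes A_k = {k + a_1, …, k + a_d} ⊆ ZMod K. Then for every positive integer m: (i) the lifted code C^(m) is a valid scalar linear index code of length K − a_d for the lifted problem with mK messages and antidotes A'_k = {k + iK : 1 ≤ i ≤ m−1} ∪ {k + a_j + iK : 1 ≤ j ≤ d, 0 ≤ i ≤ m−1} ⊆ ZMod (mK); and (ii) every valid scalar linear index code for the lifted problem has length at least K − a_d. In particular C (the case m = 1) and all lifted codes C^(m) are scalar linear index codes of optimal length. -/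
/-! Lifting is precomposition with the reduction `ZMod (m * K) → ZMod K`, a linear map sending
`e_y` to the sum of the `e_x` over the fibre of `y`. The fibre of `k̄` is `k` together with the
`k + iK`, `1 ≤ i < m`, which are antidotes of `k` in the lifted problem, and the fibre of an
antidote `k̄ + a_j` consists of antidotes of `k`; so a decoding of `e_k̄` lifts to one of `e_k`.

For the lower bound, every antidote of a message `n < K - a_d` that again lies below `K - a_d` has a
larger index. Decoding downwards from `K - a_d - 1` shows that each of these `e_n` lies in the span
of the code together with the `e_x`, `x ≥ K - a_d`; restricting to the first `K - a_d`
coordinates, the code spans a space of dimension `K - a_d`. -/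

open Submodule

theorem stdVec_eq_single (n : ℕ) : stdVec n = fun j => Pi.single j 1 := by
  funext j i
  simp [stdVec, Pi.single_apply]

theorem card_le_ncard_of_single_mem_span_sup {R ι : Type*} [Ring R] [StrongRankCondition R]
    [DecidableEq ι] {C : Set (ι → R)} (hC : C.Finite) (S : Finset ι)
    (h : ∀ s ∈ S, Pi.single s 1 ∈
      span R C ⊔ span R ((fun x => Pi.single x (1 : R)) '' (S : Set ι)ᶜ)) :
    S.card ≤ C.ncard := by
  let π := LinearMap.funLeft R R (Subtype.val : S → ι)
  have hout : ∀ x ∉ S, π (Pi.single x 1) = 0 := by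
    intro x hx
    funext s
    exact Pi.single_eq_of_ne (fun h : (s : ι) = x => hx (h ▸ s.2)) 1
  have hin : ∀ s : S, π (Pi.single s 1) = Pi.single s 1 := by
    intro s
    funext t
    simp [π, Pi.single_apply]
  have hspan : span R (π '' C) = ⊤ := by
    rw [eq_top_iff, ← (Pi.basisFun R S).span_eq, span_le]
    rintro _ ⟨s, rfl⟩
    have hs := mem_map_of_mem (f := π) (h s s.2)
    rw [Submodule.map_sup, map_span, map_span, hin s, ← Pi.basisFun_apply] at hs
    refine (sup_le le_rfl (span_le.2 ?_) : _ ≤ span R (π '' C)) hs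
    rintro _ ⟨_, ⟨x, hx, rfl⟩, rfl⟩
    exact (hout x hx).symm ▸ zero_mem _
  have := (hC.image π).fintype
  calc S.card = Module.finrank R (span R (π '' C)) := by
        rw [hspan, finrank_top, Module.finrank_fintype_fun_eq_card, Fintype.card_coe]
    _ ≤ (π '' C).ncard := by
      rw [Set.ncard_eq_toFinset_card']
      exact finrank_span_le_card _
    _ ≤ C.ncard := Set.ncard_image_le hC

-- The maximum acyclic induced subgraph bound.
theorem IsIndexCode.card_le_ncard {n : ℕ} {A : ZMod n → Set (ZMod n)}
    {C : Set (ZMod n → ZMod 2)} (hC : IsIndexCode n A C) (S : Finset (ZMod n))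
    {R : ZMod n → ZMod n → Prop} (hR : WellFounded R)
    (hacyc : ∀ s ∈ S, ∀ x ∈ A s, x ∈ S → R x s) : S.card ≤ C.ncard := by
  refine card_le_ncard_of_single_mem_span_sup hC.1 S fun s => ?_
  induction s using hR.induction with
  | _ s ih =>
    intro hs
    have hsC := hC.2 s
    rw [stdVec_eq_single] at hsC
    refine span_le.2 ?_ hsC
    rintro _ (hv | ⟨x, hx, rfl⟩)
    · exact mem_sup_left (subset_span hv)
    · by_cases hxS : x ∈ S
      · exact ih x (hacyc s hs x hx hxS) hxS
      · exact mem_sup_right (subset_span ⟨x, hxS, rfl⟩)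

theorem stdVec_comp {n n' : ℕ} [NeZero n'] (p : ZMod n' → ZMod n) (y : ZMod n) :
    stdVec n y ∘ p = ∑ x with p x = y, stdVec n' x := by
  funext j
  simp [stdVec, Finset.sum_apply]

theorem IsIndexCode.image_comp {n n' : ℕ} [NeZero n'] {A : ZMod n → Set (ZMod n)}
    {A' : ZMod n' → Set (ZMod n')} {C : Set (ZMod n → ZMod 2)} (p : ZMod n' → ZMod n)
    (hC : IsIndexCode n A C) (hfiber : ∀ k x, p x = p k → x ≠ k → x ∈ A' k)
    (hpullback : ∀ k x, p x ∈ A (p k) → x ∈ A' k) :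
    IsIndexCode n' A' ((· ∘ p) '' C) := by
  refine ⟨hC.1.image _, fun k => ?_⟩
  let L := LinearMap.funLeft (ZMod 2) (ZMod 2) p
  have hL : ∀ t, L t = t ∘ p := fun _ => rfl
  set T := span (ZMod 2) (((· ∘ p) '' C) ∪ stdVec n' '' A' k)
  have hA'T : ∀ x ∈ A' k, stdVec n' x ∈ T := fun x hx => subset_span (Or.inr ⟨x, hx, rfl⟩)
  have hLk : L (stdVec n (p k)) ∈ T := by
    have h := mem_map_of_mem (f := L) (hC.2 (p k))
    rw [map_span, Set.image_union] at h
    refine span_le.2 ?_ h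
    rintro _ (⟨t, ht, rfl⟩ | ⟨_, ⟨z, hz, rfl⟩, rfl⟩)
    · exact subset_span (Or.inl ⟨t, ht, rfl⟩)
    · rw [hL, stdVec_comp]
      refine sum_mem fun x hx => hA'T x (hpullback k x ?_)
      rwa [(Finset.mem_filter.1 hx).2]
  have hk : stdVec n' k =
      L (stdVec n (p k)) - ∑ x ∈ ({x | p x = p k} : Finset _).erase k, stdVec n' x := by
    rw [hL, stdVec_comp,
      ← Finset.add_sum_erase _ _ (Finset.mem_filter.2 ⟨Finset.mem_univ k, (rfl : p k = p k)⟩),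
      add_sub_cancel_right]
  rw [hk]
  refine sub_mem hLk (sum_mem fun x hx => hA'T x ?_)
  obtain ⟨hxk, hx⟩ := Finset.mem_erase.1 hx
  exact hfiber k x (Finset.mem_filter.1 hx).2 hxk

theorem ZMod.exists_eq_add_mul_of_castHom_eq {m K : ℕ} [NeZero (m * K)] {x y : ZMod (m * K)}
    (h : ZMod.castHom (dvd_mul_left K m) (ZMod K) x = ZMod.castHom (dvd_mul_left K m) (ZMod K) y) :
    ∃ i < m, x = y + ((i * K : ℕ) : ZMod (m * K)) := by
  obtain ⟨i, hi⟩ : K ∣ (x - y).val := by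
    rw [← ZMod.natCast_eq_zero_iff, ← map_natCast (ZMod.castHom (dvd_mul_left K m) (ZMod K)),
      ZMod.natCast_zmod_val, map_sub, h, sub_self]
  refine ⟨i, ?_, ?_⟩
  · have hlt := ZMod.val_lt (x - y)
    rw [hi, mul_comm] at hlt
    exact Nat.lt_of_mul_lt_mul_right hlt
  · rw [← sub_eq_iff_eq_add', ← ZMod.natCast_zmod_val (x - y), hi, Nat.mul_comm K i]

section Lifted

variable {K m d : ℕ} {a : Fin d → ℕ}

theorem isIndexCode_liftedA [NeZero (m * K)] {C : Set (ZMod K → ZMod 2)}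
    (hC : IsIndexCode K (fun k => {x | ∃ j : Fin d, x = k + (a j : ℕ)}) C) :
    IsIndexCode (m * K) (liftedA K m d a) (liftVec K m '' C) := by
  refine hC.image_comp _ (fun k x hx hxk => ?_) (fun k x ⟨j, hj⟩ => ?_)
  · obtain ⟨i, him, rfl⟩ := ZMod.exists_eq_add_mul_of_castHom_eq hx
    have hi : i ≠ 0 := by rintro rfl; simp at hxk
    exact Or.inl ⟨i, by omega, by omega, rfl⟩
  · rw [← map_natCast (ZMod.castHom (dvd_mul_left K m) (ZMod K)), ← map_add] at hj
    obtain ⟨i, him, rfl⟩ := ZMod.exists_eq_add_mul_of_castHom_eq hj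
    exact Or.inr ⟨j, i, by omega, rfl⟩

theorem lt_of_natCast_mem_liftedA {n n' : ℕ} (hpos : ∀ j, 0 < a j) (hn : ∀ j, n + a j < K)
    (hnK : n < K) (hn' : n' < m * K)
    (h : (n' : ZMod (m * K)) ∈ liftedA K m d a n) : n < n' := by
  have hcast : ∀ c i, c < K → i ≤ m - 1 →
      (n' : ZMod (m * K)) = ((c + i * K : ℕ) : ZMod (m * K)) → n' = c + i * K := by
    intro c i hc hi heq
    have hm : i + 1 ≤ m := by
      have : 0 < m := Nat.pos_of_ne_zero (by rintro rfl; simp at hn')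
      omega
    have hlt : c + i * K < m * K := by nlinarith [Nat.mul_le_mul_right K hm]
    have hval := congrArg ZMod.val heq
    rwa [ZMod.val_natCast_of_lt hn', ZMod.val_natCast_of_lt hlt] at hval
  rcases h with ⟨i, hi1, him, hx⟩ | ⟨j, i, him, hx⟩
  · have := hcast n i hnK him (by rw [Nat.cast_add]; exact hx)
    nlinarith
  · have := hcast (n + a j) i (hn j) him (by rw [Nat.cast_add, Nat.cast_add]; exact hx)
    have := hpos j
    omega

theorem le_ncard_of_isIndexCode_liftedA (hm : 0 < m) {b : ℕ} (hpos : ∀ j, 0 < a j)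
    (hle : ∀ j, a j ≤ b) {C' : Set (ZMod (m * K) → ZMod 2)}
    (hC' : IsIndexCode (m * K) (liftedA K m d a) C') : K - b ≤ C'.ncard := by
  have hKmK : K ≤ m * K := Nat.le_mul_of_pos_left K hm
  have hval : ∀ n < K - b, ((n : ℕ) : ZMod (m * K)).val = n :=
    fun n hn => ZMod.val_natCast_of_lt (by omega)
  let S := (Finset.range (K - b)).image (Nat.cast : ℕ → ZMod (m * K))
  have hS : S.card = K - b := by
    refine (Finset.card_image_of_injOn fun u hu v hv huv => ?_).trans (Finset.card_range _)
    simpa [hval u (Finset.mem_range.1 hu), hval v (Finset.mem_range.1 hv)] using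
      congrArg ZMod.val huv
  rw [← hS]
  refine hC'.card_le_ncard S (measure fun x : ZMod (m * K) => K - x.val).wf ?_
  simp only [S, Finset.mem_image, Finset.mem_range]
  rintro _ ⟨n, hn, rfl⟩ x hx ⟨n', hn', rfl⟩
  show K - ((n' : ℕ) : ZMod (m * K)).val < K - ((n : ℕ) : ZMod (m * K)).val
  rw [hval n hn, hval n' hn']
  have := lt_of_natCast_mem_liftedA hpos (fun j => by have := hle j; omega) (by omega)
    (by omega) hx
  omega

end Lifted

theorem lifted_codes_optimal_general (K d : ℕ) (hd : 0 < d)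
    (a : Fin d → ℕ) (ha : StrictMono a)
    (ha1 : 1 ≤ a ⟨0, hd⟩) (had : a ⟨d - 1, Nat.sub_lt hd Nat.one_pos⟩ < K)
    (C : Set (ZMod K → ZMod 2))
    (hC : IsIndexCode K (fun k => {x | ∃ j : Fin d, x = k + (a j : ℕ)}) C)
    (hlen : C.ncard = K - a ⟨d - 1, Nat.sub_lt hd Nat.one_pos⟩) :
    ∀ m : ℕ, 0 < m →
      (IsIndexCode (m * K) (liftedA K m d a) (liftVec K m '' C) ∧
        (liftVec K m '' C).ncard = K - a ⟨d - 1, Nat.sub_lt hd Nat.one_pos⟩) ∧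
      (∀ C' : Set (ZMod (m * K) → ZMod 2),
        IsIndexCode (m * K) (liftedA K m d a) C' →
          K - a ⟨d - 1, Nat.sub_lt hd Nat.one_pos⟩ ≤ C'.ncard) := by
  intro m hm
  have : NeZero (m * K) := ⟨(Nat.mul_pos hm (Nat.zero_lt_of_lt had)).ne'⟩
  have hlift_inj : Function.Injective (liftVec K m) :=
    (ZMod.castHom_surjective (dvd_mul_left K m)).injective_comp_right
  have hbounds : ∀ j, 0 < a j ∧ a j ≤ a ⟨d - 1, Nat.sub_lt hd Nat.one_pos⟩ := fun j =>
    ⟨ha1.trans (ha.monotone (Fin.le_iff_val_le_val.2 (Nat.zero_le _))),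
      ha.monotone (Fin.le_iff_val_le_val.2 (Nat.le_sub_one_of_lt j.2))⟩
  refine ⟨⟨isIndexCode_liftedA hC, ?_⟩, fun C' hC' => le_ncard_of_isIndexCode_liftedA hm
    (fun j => (hbounds j).1) (fun j => (hbounds j).2) hC'⟩
  rw [Set.ncard_image_of_injective C hlift_inj, hlen]

/-- **Theorem 2 (optimality of lifted codes).** If `C` is a valid scalar linear index code
of length exactly `K - a_d` for the problem with `K` messages and antidotes
`A_k = {k + a_1, …, k + a_d}`, then for every `m ≥ 1`: (i) the lifted code `C^(m)` is a
valid scalar linear index code of length `K - a_d` for the lifted problem with `m*K`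
messages; (ii) every valid scalar linear index code for the lifted problem has length at
least `K - a_d`.  In particular `C` and all the lifted codes are of optimal length. -/
theorem lifted_codes_optimal (K d : ℕ) (hK : 0 < K) (hd : 0 < d)
    (a : Fin d → ℕ) (ha : StrictMono a)
    (ha1 : 1 ≤ a ⟨0, hd⟩) (had : a ⟨d - 1, Nat.sub_lt hd Nat.one_pos⟩ < K)
    (C : Set (ZMod K → ZMod 2))
    (hC : IsIndexCode K (fun k => {x | ∃ j : Fin d, x = k + (a j : ℕ)}) C)
    (hlen : C.ncard = K - a ⟨d - 1, Nat.sub_lt hd Nat.one_pos⟩) :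
    ∀ m : ℕ, 0 < m →
      (IsIndexCode (m * K) (liftedA K m d a) (liftVec K m '' C) ∧
        (liftVec K m '' C).ncard = K - a ⟨d - 1, Nat.sub_lt hd Nat.one_pos⟩) ∧
      (∀ C' : Set (ZMod (m * K) → ZMod 2),
        IsIndexCode (m * K) (liftedA K m d a) C' →
          K - a ⟨d - 1, Nat.sub_lt hd Nat.one_pos⟩ ≤ C'.ncard) :=
  lifted_codes_optimal_general K d hd a ha ha1 had C hC hlen
end

section
/- Let K, D, m be positive integers with D < K and D dividing K. Consider the index coding problem with mK messages and antidotes A'_k = {k + iK : 1 ≤ i ≤ m−1} ∪ {k + D + iK : 0 ≤ i ≤ m−1} ⊆ ZMod (mK) for each k ∈ ZMod (mK). Then the set C^(m) = { e'_{i+(j−1)D} + e'_{i+jD} : 1 ≤ i ≤ D, 1 ≤ j ≤ K/D − 1 }, where e'_l = Σ_{t=0}^{m−1} e_{l+tK} ∈ V_{mK}, is a valid scalar linear index code of length K − D for this problem, and moreover every valid scalar linear index code for this problem has length at least K − D. -/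
/-- `e'_l = Σ_{t=0}^{m-1} e_{l+tK} ∈ V_{mK}`. -/
def eSum (K m : ℕ) (l : ℕ) : ZMod (m * K) → ZMod 2 :=
  ∑ t ∈ Finset.range m, stdVec (m * K) ((l + t * K : ℕ))

open Finset Submodule

theorem eSum_periodic (K m : ℕ) : Function.Periodic (eSum K m) K := by
  intro l
  cases m with
  | zero => simp [eSum]
  | succ m =>
    have hwrap : ((l + K + m * K : ℕ) : ZMod ((m + 1) * K)) = (l : ℕ) := by
      rw [show l + K + m * K = l + (m + 1) * K by ring, Nat.cast_add, ZMod.natCast_self,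
        add_zero]
    simp only [eSum]
    rw [Finset.sum_range_succ, Finset.sum_range_succ', hwrap, zero_mul, add_zero]
    congr 1
    refine Finset.sum_congr rfl fun t _ => ?_
    ring_nf

theorem eSum_apply_natCast {K m x : ℕ} (l : ℕ) (hx : x < m * K) :
    eSum K m l (x : ZMod (m * K)) = if x ≡ l [MOD K] then 1 else 0 := by
  have hK : 0 < K := Nat.pos_of_mul_pos_left (by omega : 0 < m * K)
  rw [← (eSum_periodic K m).map_mod_nat l, eSum, Finset.sum_apply]
  have hl : l % K < K := Nat.mod_lt l hK
  have hterm : ∀ t ∈ range m, stdVec (m * K) ((l % K + t * K : ℕ)) (x : ZMod (m * K)) =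
      if t = x / K ∧ x % K = l % K then 1 else 0 := by
    intro t ht
    have ht' : l % K + t * K < m * K := by
      have := Nat.mul_le_mul_right K (Finset.mem_range.1 ht); rw [Nat.succ_mul] at this; omega
    have hiff : (x : ZMod (m * K)) = ((l % K + t * K : ℕ) : ZMod (m * K)) ↔
        t = x / K ∧ x % K = l % K := by
      rw [ZMod.natCast_eq_natCast_iff', Nat.mod_eq_of_lt hx, Nat.mod_eq_of_lt ht',
        eq_comm (a := t), Nat.div_mod_unique hK, mul_comm]
      simp [hl, eq_comm]
    exact if_congr hiff rfl rfl
  rw [Finset.sum_congr rfl hterm]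
  unfold Nat.ModEq
  by_cases h : x % K = l % K
  · have hxK : x / K ∈ range m := Finset.mem_range.2 (Nat.div_lt_of_lt_mul (by linarith))
    simp [h, hxK]
  · simp [h]

theorem eSum_eq_stdVec_add_sum {K m : ℕ} (hm : 0 < m) (l : ℕ) :
    eSum K m l = stdVec (m * K) (l : ZMod (m * K)) +
      ∑ t ∈ range (m - 1), stdVec (m * K) ((l + (t + 1) * K : ℕ)) := by
  obtain ⟨m, rfl⟩ := Nat.exists_eq_add_one_of_ne_zero hm.ne'
  rw [eSum, Finset.sum_range_succ', Nat.add_sub_cancel, zero_mul, add_zero]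
  exact add_comm _ _

theorem ZModModule.add_mem_of_forall_add_succ_mem {M : Type*} [AddCommGroup M]
    [Module (ZMod 2) M] {p : Submodule (ZMod 2) M} {f : ℕ → M} {n : ℕ}
    (h : ∀ j < n, f j + f (j + 1) ∈ p) : f 0 + f n ∈ p := by
  induction n with
  | zero => simp [ZModModule.add_self]
  | succ n ih =>
    rw [← ZModModule.add_add_add_cancel (f 0) (f n)]
    exact p.add_mem (ih fun j hj => h j (by omega)) (h n n.lt_succ_self)

def liftedAntidotes (K D m : ℕ) (k : ZMod (m * K)) : Set (ZMod (m * K)) :=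
  {x | ∃ i : ℕ, 1 ≤ i ∧ i ≤ m - 1 ∧ x = k + (i * K : ℕ)} ∪
    {x | ∃ i : ℕ, i ≤ m - 1 ∧ x = k + (D + i * K : ℕ)}

def liftedCode (K D m : ℕ) : Set (ZMod (m * K) → ZMod 2) :=
  {v | ∃ i j : ℕ, 1 ≤ i ∧ i ≤ D ∧ 1 ≤ j ∧ j ≤ K / D - 1 ∧
    v = eSum K m (i + (j - 1) * D) + eSum K m (i + j * D)}

theorem exists_eq_add_sub_one_mul_iff_mem_Icc {D q a : ℕ} (hD : 0 < D) :
    (∃ i j : ℕ, 1 ≤ i ∧ i ≤ D ∧ 1 ≤ j ∧ j ≤ q - 1 ∧ a = i + (j - 1) * D) ↔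
      a ∈ Set.Icc 1 (q * D - D) := by
  constructor
  · rintro ⟨i, j, hi1, hi2, hj1, hj2, rfl⟩
    have h1 : j * D ≤ (q - 1) * D := Nat.mul_le_mul_right D hj2
    have h2 : D ≤ j * D := Nat.le_mul_of_pos_left D hj1
    rw [Nat.sub_one_mul] at h1 ⊢
    exact ⟨by omega, by omega⟩
  · rintro ⟨ha1, ha2⟩
    have hdiv : (a - 1) / D < q - 1 := by
      rw [Nat.div_lt_iff_lt_mul hD, Nat.sub_one_mul q D]; omega
    refine ⟨(a - 1) % D + 1, (a - 1) / D + 1, by omega, Nat.mod_lt _ hD, Nat.le_add_left 1 _,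
      by omega, ?_⟩
    rw [Nat.add_sub_cancel]
    have := Nat.mod_add_div' (a - 1) D
    omega

theorem liftedCode_eq_image {K D m : ℕ} (hD : 0 < D) (hdvd : D ∣ K) :
    liftedCode K D m = (fun a => eSum K m a + eSum K m (a + D)) '' Set.Icc 1 (K - D) := by
  have hq : K / D * D = K := Nat.div_mul_cancel hdvd
  ext v
  constructor
  · rintro ⟨i, j, hi1, hi2, hj1, hj2, rfl⟩
    refine ⟨i + (j - 1) * D, ?_, ?_⟩
    · rw [← hq]
      exact (exists_eq_add_sub_one_mul_iff_mem_Icc hD).1 ⟨i, j, hi1, hi2, hj1, hj2, rfl⟩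
    · simp only [add_assoc, Nat.sub_one_mul, Nat.sub_add_cancel (Nat.le_mul_of_pos_left D hj1)]
  · rintro ⟨a, ha, rfl⟩
    rw [← hq] at ha
    obtain ⟨i, j, hi1, hi2, hj1, hj2, rfl⟩ := (exists_eq_add_sub_one_mul_iff_mem_Icc hD).2 ha
    refine ⟨i, j, hi1, hi2, hj1, hj2, ?_⟩
    simp only [add_assoc, Nat.sub_one_mul, Nat.sub_add_cancel (Nat.le_mul_of_pos_left D hj1)]

theorem injOn_eSum_add_eSum_add {K D m : ℕ} (hm : 0 < m) (hD : 0 < D) :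
    Set.InjOn (fun a => eSum K m a + eSum K m (a + D)) (Set.Icc 1 (K - D)) := by
  have hne : ∀ a ∈ Set.Icc 1 (K - D), ∀ b ∈ Set.Icc 1 (K - D), a < b →
      eSum K m a + eSum K m (a + D) ≠ eSum K m b + eSum K m (b + D) := by
    rintro a ⟨ha1, ha2⟩ b ⟨hb1, hb2⟩ hab heq
    have hsep : ∀ l, a < l → l < a + K → ¬ a ≡ l [MOD K] := fun l h1 h2 h =>
      absurd (Nat.le_of_dvd (by omega) ((Nat.modEq_iff_dvd' h1.le).1 h)) (by omega)
    have haK : a < m * K := by have := Nat.le_mul_of_pos_left K hm; omega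
    have hval := congrFun heq (a : ZMod (m * K))
    simp only [Pi.add_apply, eSum_apply_natCast _ haK, Nat.ModEq.refl a, if_true,
      if_neg (hsep (a + D) (by omega) (by omega)), if_neg (hsep b hab (by omega)),
      if_neg (hsep (b + D) (by omega) (by omega))] at hval
    exact one_ne_zero hval
  intro a ha b hb h
  by_contra hab
  rcases Nat.lt_or_gt_of_ne hab with hlt | hlt
  · exact hne a ha b hb hlt h
  · exact hne b hb a ha hlt h.symm

theorem ncard_liftedCode {K D m : ℕ} (hm : 0 < m) (hD : 0 < D) (hdvd : D ∣ K) :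
    (liftedCode K D m).ncard = K - D := by
  rw [liftedCode_eq_image hD hdvd, (injOn_eSum_add_eSum_add hm hD).ncard_image,
    Set.ncard_Icc_nat, Nat.add_sub_cancel]

theorem eSum_add_eSum_add_mem_span_liftedCode {K D m : ℕ} (hD : 0 < D) (hDK : D < K)
    (hdvd : D ∣ K) (r : ℕ) :
    eSum K m r + eSum K m (r + D) ∈ span (ZMod 2) (liftedCode K D m) := by
  set g : ℕ → ZMod (m * K) → ZMod 2 := fun a => eSum K m a + eSum K m (a + D)
  have hq : K / D * D = K := Nat.div_mul_cancel hdvd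
  have hcode : ∀ a ∈ Set.Icc 1 (K - D), g a ∈ span (ZMod 2) (liftedCode K D m) := fun a ha =>
    subset_span (liftedCode_eq_image hD hdvd ▸ Set.mem_image_of_mem g ha)
  -- for `K - D < s ≤ K`, telescope along `i, i + D, …, i + (K/D - 1) D = s`, using `s + D ≡ i`
  have hwrap : ∀ i ∈ Set.Icc 1 D, g (i + (K - D)) ∈ span (ZMod 2) (liftedCode K D m) := by
    rintro i ⟨hi1, hi2⟩
    have hchain := ZModModule.add_mem_of_forall_add_succ_mem
      (p := span (ZMod 2) (liftedCode K D m)) (f := fun j => eSum K m (i + j * D))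
      (n := K / D - 1) fun j hj => by
        have hjD : j * D ≤ (K / D - 2) * D := Nat.mul_le_mul_right D (by omega)
        have h2D : 2 * D ≤ K / D * D := Nat.mul_le_mul_right D (by omega)
        rw [Nat.sub_mul (K / D) 2 D, hq] at hjD
        rw [hq] at h2D
        have hmem : i + j * D ∈ Set.Icc 1 (K - D) := ⟨by omega, by omega⟩
        simpa [g, add_mul, add_assoc] using hcode _ hmem
    simp only [zero_mul, add_zero, Nat.sub_one_mul, hq] at hchain
    rw [add_comm] at hchain
    simpa [g, show i + (K - D) + D = i + K by omega, (eSum_periodic K m) i] using hchain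
  have hall : ∀ s ∈ Set.Icc 1 K, g s ∈ span (ZMod 2) (liftedCode K D m) := by
    rintro s ⟨hs1, hs2⟩
    by_cases hs : s ≤ K - D
    · exact hcode s ⟨hs1, hs⟩
    · simpa [show s - (K - D) + (K - D) = s by omega] using
        hwrap (s - (K - D)) ⟨by omega, by omega⟩
  have hgK : Function.Periodic g K := (eSum_periodic K m).add ((eSum_periodic K m).add_const D)
  change g r ∈ _
  rw [← hgK.map_mod_nat r]
  rcases Nat.eq_zero_or_pos (r % K) with h0 | hpos
  · rw [h0, ← hgK 0, zero_add]
    exact hall K ⟨by omega, le_rfl⟩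
  · exact hall _ ⟨hpos, (Nat.mod_lt r (by omega)).le⟩

theorem isIndexCode_liftedCode {K D m : ℕ} (hD : 0 < D) (hm : 0 < m) (hDK : D < K)
    (hdvd : D ∣ K) : IsIndexCode (m * K) (liftedAntidotes K D m) (liftedCode K D m) := by
  refine ⟨liftedCode_eq_image hD hdvd ▸ (Set.finite_Icc _ _).image _, fun k => ?_⟩
  have : NeZero (m * K) := ⟨(Nat.mul_pos hm (hD.trans hDK)).ne'⟩
  set W := span (ZMod 2) (liftedCode K D m ∪ stdVec (m * K) '' liftedAntidotes K D m k)
  obtain ⟨l, rfl⟩ : ∃ l : ℕ, (l : ZMod (m * K)) = k := ⟨k.val, ZMod.natCast_zmod_val k⟩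
  have hanti : ∀ x ∈ liftedAntidotes K D m (l : ZMod (m * K)), stdVec (m * K) x ∈ W :=
    fun x hx => subset_span (Or.inr ⟨x, hx, rfl⟩)
  have hshift : eSum K m (l + D) ∈ W := sum_mem fun t ht => hanti _ <| Or.inr
    ⟨t, by rw [Finset.mem_range] at ht; omega, by push_cast; ring⟩
  have hpair : eSum K m l + eSum K m (l + D) ∈ W :=
    span_mono Set.subset_union_left (eSum_add_eSum_add_mem_span_liftedCode hD hDK hdvd l)
  have hrest : ∑ t ∈ range (m - 1), stdVec (m * K) ((l + (t + 1) * K : ℕ)) ∈ W :=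
    sum_mem fun t ht => hanti _ <| Or.inl
      ⟨t + 1, by omega, by rw [Finset.mem_range] at ht; omega, by push_cast; ring⟩
  have hl : eSum K m l ∈ W := (W.add_mem_iff_left hshift).1 hpair
  rw [eSum_eq_stdVec_add_sum hm] at hl
  exact (W.add_mem_iff_left hrest).1 hl

section AcyclicBound

variable {n : ℕ} {A : ZMod n → Set (ZMod n)} {C : Set (ZMod n → ZMod 2)}

theorem IsIndexCode.stdVec_mem_span_of_acyclic (hC : IsIndexCode n A C) {S : Set (ZMod n)}
    (f : ZMod n → ℕ) (hf : ∀ k ∈ S, ∀ j ∈ A k, j ∈ S → f j < f k) :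
    ∀ k ∈ S, stdVec n k ∈ span (ZMod 2) (C ∪ stdVec n '' Sᶜ) := by
  intro k
  induction hN : f k using Nat.strong_induction_on generalizing k with
  | _ N ih =>
    intro hk
    refine span_le.2 ?_ (hC.2 k)
    rintro v (hv | ⟨j, hj, rfl⟩)
    · exact subset_span (Or.inl hv)
    · by_cases hjS : j ∈ S
      · exact ih (f j) (hN ▸ hf k hk j hj hjS) j rfl hjS
      · exact subset_span (Or.inr ⟨j, hjS, rfl⟩)

theorem card_le_ncard_of_stdVec_mem_span (hC : C.Finite) (S : Finset (ZMod n))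
    (h : ∀ k ∈ S, stdVec n k ∈ span (ZMod 2) (C ∪ stdVec n '' (↑S)ᶜ)) :
    S.card ≤ C.ncard := by
  classical
  obtain ⟨C, rfl⟩ := hC.exists_finset_coe
  let π : (ZMod n → ZMod 2) →ₗ[ZMod 2] (S → ZMod 2) :=
    LinearMap.funLeft (ZMod 2) (ZMod 2) Subtype.val
  have hπ : ∀ k, π (stdVec n k) = if hk : k ∈ S then Pi.single ⟨k, hk⟩ 1 else 0 := by
    intro k
    funext i
    split_ifs with hk
    · simp [π, LinearMap.funLeft_apply, stdVec, Pi.single_apply, Subtype.ext_iff]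
    · have : (i : ZMod n) ≠ k := fun h => hk (h ▸ i.2)
      simp [π, LinearMap.funLeft_apply, stdVec, this]
  have hsingle : ∀ k : S, Pi.single k 1 ∈ span (ZMod 2) (π '' C) := by
    intro k
    have hk := mem_map_of_mem (f := π) (h k k.2)
    rw [map_span, hπ, dif_pos k.2] at hk
    refine span_le.2 ?_ hk
    rintro _ ⟨v, hv | ⟨j, hj, rfl⟩, rfl⟩
    · exact subset_span ⟨v, hv, rfl⟩
    · rw [hπ, dif_neg (show j ∉ S from hj)]
      exact zero_mem _
  have htop : span (ZMod 2) (π '' C) = ⊤ := by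
    rw [eq_top_iff, ← (Pi.basisFun (ZMod 2) S).span_eq, span_le]
    rintro _ ⟨k, rfl⟩
    simpa using hsingle k
  calc S.card = Module.finrank (ZMod 2) (S → ZMod 2) := by simp
    _ = (↑(C.image π) : Set (S → ZMod 2)).finrank (ZMod 2) := by
      rw [Set.finrank, Finset.coe_image, htop, finrank_top]
    _ ≤ (C.image π).card := finrank_span_finset_le_card _
    _ ≤ C.card := card_image_le
    _ = (↑C : Set (ZMod n → ZMod 2)).ncard := (Set.ncard_coe_finset C).symm

theorem IsIndexCode.card_le_ncard_of_acyclic (hC : IsIndexCode n A C) (S : Finset (ZMod n))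
    (f : ZMod n → ℕ) (hf : ∀ k ∈ S, ∀ j ∈ A k, j ∈ S → f j < f k) : S.card ≤ C.ncard :=
  card_le_ncard_of_stdVec_mem_span hC.1 S (hC.stdVec_mem_span_of_acyclic f hf)

end AcyclicBound

theorem exists_eq_add_natCast_of_mem_liftedAntidotes {K D m : ℕ} (hDK : D ≤ K)
    {k x : ZMod (m * K)} (hx : x ∈ liftedAntidotes K D m k) :
    ∃ c : ℕ, D ≤ c ∧ c ≤ D + (m - 1) * K ∧ x = k + c := by
  rcases hx with ⟨i, hi1, hi2, rfl⟩ | ⟨i, hi, rfl⟩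
  · have h1 := Nat.le_mul_of_pos_left K hi1
    have h2 := Nat.mul_le_mul_right K hi2
    exact ⟨i * K, by omega, by omega, rfl⟩
  · have := Nat.mul_le_mul_right K hi
    exact ⟨D + i * K, by omega, by omega, rfl⟩

theorem sub_le_ncard_of_isIndexCode_liftedAntidotes {K D m : ℕ} (hD : 0 < D) (hm : 0 < m)
    (hDK : D < K) {C : Set (ZMod (m * K) → ZMod 2)}
    (hC : IsIndexCode (m * K) (liftedAntidotes K D m) C) : K - D ≤ C.ncard := by
  have hmK : (m - 1) * K + K = m * K := by
    rw [Nat.sub_one_mul, Nat.sub_add_cancel (Nat.le_mul_of_pos_left K hm)]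
  have : NeZero (m * K) := ⟨by omega⟩
  let S : Finset (ZMod (m * K)) := (range (K - D)).image Nat.cast
  have hS : ∀ x, x ∈ S ↔ x.val < K - D := by
    intro x
    simp only [S, mem_image, mem_range]
    constructor
    · rintro ⟨i, hi, rfl⟩
      rwa [ZMod.val_natCast_of_lt (by omega)]
    · exact fun hx => ⟨x.val, hx, ZMod.natCast_zmod_val x⟩
  have hcard : S.card = K - D := by
    rw [card_image_of_injOn, card_range]
    intro a ha b hb hab
    have := congrArg ZMod.val hab
    rwa [ZMod.val_natCast_of_lt ((Finset.mem_range.1 ha).trans (by omega)),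
      ZMod.val_natCast_of_lt ((Finset.mem_range.1 hb).trans (by omega))] at this
  rw [← hcard]
  refine hC.card_le_ncard_of_acyclic S (fun x => K - D - x.val) ?_
  intro k hk j hj hjS
  rw [hS] at hk hjS
  obtain ⟨c, hc1, hc2, rfl⟩ := exists_eq_add_natCast_of_mem_liftedAntidotes hDK.le hj
  have hval : (k + (c : ZMod (m * K))).val = k.val + c := by
    rw [ZMod.val_add, ZMod.val_natCast_of_lt (by omega), Nat.mod_eq_of_lt (by omega)]
  rw [hval] at hjS ⊢
  omega

theorem lifted_code_caseI_general (K D m : ℕ) (hD : 0 < D) (hm : 0 < m)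
    (hDK : D < K) (hdvd : D ∣ K) :
    (IsIndexCode (m * K)
        (fun k => {x | ∃ i : ℕ, 1 ≤ i ∧ i ≤ m - 1 ∧ x = k + (i * K : ℕ)} ∪
          {x | ∃ i : ℕ, i ≤ m - 1 ∧ x = k + (D + i * K : ℕ)})
        {v | ∃ i j : ℕ, 1 ≤ i ∧ i ≤ D ∧ 1 ≤ j ∧ j ≤ K / D - 1 ∧
          v = eSum K m (i + (j - 1) * D) + eSum K m (i + j * D)} ∧
      ({v | ∃ i j : ℕ, 1 ≤ i ∧ i ≤ D ∧ 1 ≤ j ∧ j ≤ K / D - 1 ∧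
          v = eSum K m (i + (j - 1) * D) + eSum K m (i + j * D)} :
        Set (ZMod (m * K) → ZMod 2)).ncard = K - D) ∧
    (∀ C' : Set (ZMod (m * K) → ZMod 2),
      IsIndexCode (m * K)
        (fun k => {x | ∃ i : ℕ, 1 ≤ i ∧ i ≤ m - 1 ∧ x = k + (i * K : ℕ)} ∪
          {x | ∃ i : ℕ, i ≤ m - 1 ∧ x = k + (D + i * K : ℕ)}) C' →
        K - D ≤ C'.ncard) :=
  ⟨⟨isIndexCode_liftedCode hD hm hDK hdvd, ncard_liftedCode hm hD hdvd⟩,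
    fun _ hC => sub_le_ncard_of_isIndexCode_liftedAntidotes hD hm hDK hC⟩

/-- **Lifting Corollary 1 / Case I.** For `D ∣ K`, `D < K`, the lifted code
`{e'_{i+(j-1)D} + e'_{i+jD}}` is a valid scalar linear index code of optimal length
`K - D` for the lift of the problem with antidotes `{k + D}`. -/
theorem lifted_code_caseI (K D m : ℕ) (hK : 0 < K) (hD : 0 < D) (hm : 0 < m)
    (hDK : D < K) (hdvd : D ∣ K) :
    (IsIndexCode (m * K)
        (fun k => {x | ∃ i : ℕ, 1 ≤ i ∧ i ≤ m - 1 ∧ x = k + (i * K : ℕ)} ∪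
          {x | ∃ i : ℕ, i ≤ m - 1 ∧ x = k + (D + i * K : ℕ)})
        {v | ∃ i j : ℕ, 1 ≤ i ∧ i ≤ D ∧ 1 ≤ j ∧ j ≤ K / D - 1 ∧
          v = eSum K m (i + (j - 1) * D) + eSum K m (i + j * D)} ∧
      ({v | ∃ i j : ℕ, 1 ≤ i ∧ i ≤ D ∧ 1 ≤ j ∧ j ≤ K / D - 1 ∧
          v = eSum K m (i + (j - 1) * D) + eSum K m (i + j * D)} :
        Set (ZMod (m * K) → ZMod 2)).ncard = K - D) ∧
    (∀ C' : Set (ZMod (m * K) → ZMod 2),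
      IsIndexCode (m * K)
        (fun k => {x | ∃ i : ℕ, 1 ≤ i ∧ i ≤ m - 1 ∧ x = k + (i * K : ℕ)} ∪
          {x | ∃ i : ℕ, i ≤ m - 1 ∧ x = k + (D + i * K : ℕ)}) C' →
        K - D ≤ C'.ncard) :=
  lifted_code_caseI_general K D m hD hm hDK hdvd
end

section
/- Let K, D be positive integers with D < K and D dividing K. Then: (i) for every k ∈ ZMod (2K), the m = 2 lifted antidote pattern of the problem with K messages and antidotes {k + D} equals {k + K, k + D, k + D + K} ⊆ ZMod (2K), and, setting K' = 2K and D' = K + D, this set equals {k + K'/2, k + (D' − K'/2), k + D'} with D' − K'/2 = D dividing K'/2 = K; (ii) the m = 2 lift of the code C_a = { e_{i+(j−1)D} + e_{i+jD} : 1 ≤ i ≤ D, 1 ≤ j ≤ K/D − 1 } ⊆ V_K equals the code C_b = { e_{i+jD} + e_{K+i+jD} + e_{i+(j+1)D} + e_{K+i+(j+1)D} : 1 ≤ i ≤ D, 0 ≤ j ≤ K/D − 2 } ⊆ V_{2K}. -/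
/-- The optimal code `C_a` of Case (a): `{e_{i+(j-1)D} + e_{i+jD}}` on `K` messages. -/
def codeCaseA (K D : ℕ) : Set (ZMod K → ZMod 2) :=
  {v | ∃ i j : ℕ, 1 ≤ i ∧ i ≤ D ∧ 1 ≤ j ∧ j ≤ K / D - 1 ∧
    v = stdVec K ((i + (j - 1) * D : ℕ)) + stdVec K ((i + j * D : ℕ))}

/-- The optimal code `C_b` of Case (b) on `2K` messages:
`{e_{i+jD} + e_{K+i+jD} + e_{i+(j+1)D} + e_{K+i+(j+1)D}}`. -/
def codeCaseB (K D : ℕ) : Set (ZMod (2 * K) → ZMod 2) :=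
  {v | ∃ i j : ℕ, 1 ≤ i ∧ i ≤ D ∧ j ≤ K / D - 2 ∧
    v = stdVec (2 * K) ((i + j * D : ℕ)) + stdVec (2 * K) ((K + i + j * D : ℕ)) +
      stdVec (2 * K) ((i + (j + 1) * D : ℕ)) + stdVec (2 * K) ((K + i + (j + 1) * D : ℕ))}

lemma ZMod.castHom_two_mul_eq_zero_iff {K : ℕ} [NeZero K] (z : ZMod (2 * K)) :
    ZMod.castHom (dvd_mul_left K 2) (ZMod K) z = 0 ↔ z = 0 ∨ z = K := by
  constructor
  · intro hz
    rw [← ZMod.natCast_zmod_val z, map_natCast, ZMod.natCast_eq_zero_iff] at hz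
    obtain ⟨c, hc⟩ := hz
    have hc1 : c < 2 := by
      have := z.val_lt
      nlinarith [NeZero.pos K]
    rw [← ZMod.natCast_zmod_val z, hc]
    interval_cases c <;> simp
  · rintro (rfl | rfl) <;> simp

lemma ZMod.castHom_two_mul_eq_iff {K : ℕ} [NeZero K] (y j : ZMod (2 * K)) :
    ZMod.castHom (dvd_mul_left K 2) (ZMod K) y = ZMod.castHom (dvd_mul_left K 2) (ZMod K) j ↔
      y = j ∨ y = j + K := by
  rw [← sub_eq_zero, ← map_sub, ZMod.castHom_two_mul_eq_zero_iff, sub_eq_zero, sub_eq_iff_eq_add']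

lemma liftVec_add (K m : ℕ) (u v : ZMod K → ZMod 2) :
    liftVec K m (u + v) = liftVec K m u + liftVec K m v := rfl

lemma liftVec_two_stdVec_castHom {K : ℕ} [NeZero K] (j : ZMod (2 * K)) :
    liftVec K 2 (stdVec K (ZMod.castHom (dvd_mul_left K 2) (ZMod K) j)) =
      stdVec (2 * K) j + stdVec (2 * K) (j + K) := by
  have hK : (K : ZMod (2 * K)) ≠ 0 := by
    rw [Ne, ZMod.natCast_eq_zero_iff]
    exact fun h => NeZero.ne K (Nat.eq_zero_of_dvd_of_lt h (by have := NeZero.pos K; omega))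
  have hne : j ≠ j + K := fun h => hK (by simpa using h)
  funext y
  simp only [liftVec, stdVec, Pi.add_apply, ZMod.castHom_two_mul_eq_iff]
  by_cases h : y = j
  · subst h; simp [hne]
  · by_cases h' : y = j + K <;> simp [h, h', hK]

lemma liftVec_two_stdVec_natCast {K : ℕ} [NeZero K] (n : ℕ) :
    liftVec K 2 (stdVec K n) = stdVec (2 * K) n + stdVec (2 * K) ((K + n : ℕ)) := by
  rw [← map_natCast (ZMod.castHom (dvd_mul_left K 2) (ZMod K)), liftVec_two_stdVec_castHom]
  push_cast
  rw [add_comm (n : ZMod (2 * K))]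

lemma liftedA_two_one (K a : ℕ) (k : ZMod (2 * K)) :
    liftedA K 2 1 (fun _ => a) k = {k + (K : ℕ), k + (a : ℕ), k + (a + K : ℕ)} := by
  ext x
  simp only [liftedA, Set.mem_union, Set.mem_ofPred_eq, Set.mem_insert_iff,
    Set.mem_singleton_iff, exists_const]
  have hle : ∀ i : ℕ, 1 ≤ i ∧ i ≤ 1 ↔ i = 1 := by omega
  simp only [Nat.reduceSub, ← and_assoc, hle, exists_eq_left]
  simp only [Nat.le_one_iff_eq_zero_or_eq_one, or_and_right, exists_or, exists_eq_left]
  push_cast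
  simp only [zero_mul, one_mul, add_zero, add_assoc]

lemma liftVec_image_codeCaseA {K D : ℕ} (hDK : D < K) (hdvd : D ∣ K) :
    liftVec K 2 '' codeCaseA K D = codeCaseB K D := by
  have : NeZero K := ⟨by omega⟩
  have hD : 0 < D := Nat.pos_of_dvd_of_pos hdvd (by omega)
  have hKD : 1 < K / D := by
    obtain ⟨t, rfl⟩ := hdvd
    rw [Nat.mul_div_cancel_left t hD]
    exact Nat.lt_of_mul_lt_mul_left (a := D) (by simpa using hDK)
  ext v
  simp only [Set.mem_image, codeCaseA, codeCaseB, Set.mem_ofPred_eq]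
  constructor
  · rintro ⟨w, ⟨i, j, hi1, hiD, hj1, hjK, rfl⟩, rfl⟩
    refine ⟨i, j - 1, hi1, hiD, by omega, ?_⟩
    rw [liftVec_add, liftVec_two_stdVec_natCast, liftVec_two_stdVec_natCast,
      Nat.sub_add_cancel hj1]
    simp only [Nat.add_assoc]
    abel
  · rintro ⟨i, j, hi1, hiD, hjK, rfl⟩
    refine ⟨_, ⟨i, j + 1, hi1, hiD, by omega, by omega, rfl⟩, ?_⟩
    rw [liftVec_add, liftVec_two_stdVec_natCast, liftVec_two_stdVec_natCast,
      Nat.add_sub_cancel]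
    simp only [Nat.add_assoc]
    abel

theorem caseA_lift_is_caseB_general (K D : ℕ) (hDK : D < K)
    (hdvd : D ∣ K) :
    (∀ k : ZMod (2 * K),
      liftedA K 2 1 (fun _ => D) k =
        ({k + (K : ℕ), k + (D : ℕ), k + (D + K : ℕ)} : Set (ZMod (2 * K))) ∧
      ({k + (K : ℕ), k + (D : ℕ), k + (D + K : ℕ)} : Set (ZMod (2 * K))) =
        ({k + ((2 * K) / 2 : ℕ), k + ((K + D) - (2 * K) / 2 : ℕ), k + ((K + D : ℕ))} :
          Set (ZMod (2 * K))) ∧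
      ((K + D) - (2 * K) / 2 = D ∧ ((K + D) - (2 * K) / 2) ∣ ((2 * K) / 2))) ∧
    liftVec K 2 '' codeCaseA K D = codeCaseB K D := by
  have hhalf : 2 * K / 2 = K := by omega
  have hdiff : K + D - K = D := by omega
  refine ⟨fun k => ⟨liftedA_two_one K D k, ?_, ?_⟩, liftVec_image_codeCaseA hDK hdvd⟩
  · rw [hhalf, hdiff, Nat.add_comm D K]
  · rw [hhalf, hdiff]
    exact ⟨rfl, hdvd⟩

/-- **Proposition 1.** For `D ∣ K`, `D < K`: (i) the `m = 2` lift of the antidote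
pattern `{k + D}` on `K` messages equals `{k + K, k + D, k + D + K}` on `2K` messages,
which, with `K' = 2K` and `D' = K + D`, is `{k + K'/2, k + (D' - K'/2), k + D'}` with
`D' - K'/2 = D` dividing `K'/2 = K`; (ii) the `m = 2` lift of the Case (a) code equals
the Case (b) code. -/
theorem caseA_lift_is_caseB (K D : ℕ) (hK : 0 < K) (hD : 0 < D) (hDK : D < K)
    (hdvd : D ∣ K) :
    (∀ k : ZMod (2 * K),
      liftedA K 2 1 (fun _ => D) k =
        ({k + (K : ℕ), k + (D : ℕ), k + (D + K : ℕ)} : Set (ZMod (2 * K))) ∧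
      ({k + (K : ℕ), k + (D : ℕ), k + (D + K : ℕ)} : Set (ZMod (2 * K))) =
        ({k + ((2 * K) / 2 : ℕ), k + ((K + D) - (2 * K) / 2 : ℕ), k + ((K + D : ℕ))} :
          Set (ZMod (2 * K))) ∧
      ((K + D) - (2 * K) / 2 = D ∧ ((K + D) - (2 * K) / 2) ∣ ((2 * K) / 2))) ∧
    liftVec K 2 '' codeCaseA K D = codeCaseB K D :=
  caseA_lift_is_caseB_general K D hDK hdvd
end

section
/- Let K, D, m be positive integers with 0 < D < K and K − D dividing K (hence K − D divides D and divides (m−1)K + D). Then for every k ∈ ZMod (mK) the following set identity holds in ZMod (mK): {k + iK : 1 ≤ i ≤ m−1} ∪ {k + p(K−D) + iK : 1 ≤ p ≤ D/(K−D), 0 ≤ i ≤ m−1} = {k + j(K−D) : 1 ≤ j ≤ ((m−1)K + D)/(K−D)}. Consequently, the lift with parameter m of the index coding problem with K messages and antidotes A_k = {k + j(K−D) : 1 ≤ j ≤ D/(K−D)} is exactly the problem of the same class with parameters K' = mK and D' = (m−1)K + D, which again satisfy K' − D' dividing K'. -/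
/-! Write `K = (K - D) q`. Euclidean division by `q` splits the indices
`1 ≤ j ≤ (m - 1) q + (q - 1)` as `j = p + i q` with `i ≤ m - 1` and `0 ≤ p < q`, not both zero:
`p = 0` gives the multiples `i K`, `p ≥ 1` the points `p (K - D) + i K`. Since
`D = (K - D)(q - 1)`, the bounds `D / (K - D)` and `((m - 1) K + D) / (K - D)` are `q - 1` and
`(m - 1) q + (q - 1)`, and `mK - ((m - 1) K + D) = K - D`. -/

theorem Nat.one_le_and_le_mul_add_pred_iff {q M j : ℕ} (hq : 0 < q) :
    (1 ≤ j ∧ j ≤ M * q + (q - 1)) ↔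
      (∃ i, 1 ≤ i ∧ i ≤ M ∧ j = i * q) ∨
        ∃ p i, 1 ≤ p ∧ p ≤ q - 1 ∧ i ≤ M ∧ j = p + i * q := by
  constructor
  · rintro ⟨hj1, hj2⟩
    have hdiv : j / q ≤ M := by
      rw [Nat.div_le_iff_le_mul_add_pred hq, mul_comm]; exact hj2
    rcases Nat.eq_zero_or_pos (j % q) with hmod | hmod
    · have hqj : q ∣ j := Nat.dvd_of_mod_eq_zero hmod
      exact .inl ⟨j / q, Nat.div_pos (Nat.le_of_dvd hj1 hqj) hq, hdiv,
        (Nat.div_mul_cancel hqj).symm⟩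
    · exact .inr ⟨j % q, j / q, hmod, by have := Nat.mod_lt j hq; omega, hdiv,
        (Nat.mod_add_div' j q).symm⟩
  · rintro (⟨i, hi1, hiM, rfl⟩ | ⟨p, i, hp1, hpq, hiM, rfl⟩)
    · constructor <;> nlinarith
    · constructor <;> nlinarith

theorem lift_union_eq_setOf_multiples {α : Type*} (f : ℕ → α) {c q : ℕ} (M : ℕ)
    (hq : 0 < q) :
    {x | ∃ i : ℕ, 1 ≤ i ∧ i ≤ M ∧ x = f (i * (c * q))} ∪
        {x | ∃ p i : ℕ, 1 ≤ p ∧ p ≤ q - 1 ∧ i ≤ M ∧ x = f (p * c + i * (c * q))} =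
      {x | ∃ j : ℕ, 1 ≤ j ∧ j ≤ M * q + (q - 1) ∧ x = f (j * c)} := by
  ext x
  simp only [Set.mem_union, Set.mem_ofPred_eq]
  have hindex (j : ℕ) := Nat.one_le_and_le_mul_add_pred_iff (M := M) (j := j) hq
  constructor
  · rintro (⟨i, hi1, hiM, rfl⟩ | ⟨p, i, hp1, hpq, hiM, rfl⟩)
    · obtain ⟨hj1, hj2⟩ := (hindex _).2 (.inl ⟨i, hi1, hiM, rfl⟩)
      exact ⟨i * q, hj1, hj2, by ring_nf⟩
    · obtain ⟨hj1, hj2⟩ := (hindex _).2 (.inr ⟨p, i, hp1, hpq, hiM, rfl⟩)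
      exact ⟨p + i * q, hj1, hj2, by ring_nf⟩
  · rintro ⟨j, hj1, hj2, rfl⟩
    rcases (hindex _).1 ⟨hj1, hj2⟩ with
      ⟨i, hi1, hiM, rfl⟩ | ⟨p, i, hp1, hpq, hiM, rfl⟩
    · exact .inl ⟨i, hi1, hiM, by ring_nf⟩
    · exact .inr ⟨p, i, hp1, hpq, hiM, by ring_nf⟩

section
variable {K D q : ℕ}

theorem eq_sub_mul_pred_of_eq_sub_mul (hDK : D < K) (hq : K = (K - D) * q) :
    D = (K - D) * (q - 1) := by
  rw [Nat.mul_sub_one, ← hq]; omega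

theorem div_sub_of_eq_sub_mul (hDK : D < K) (hq : K = (K - D) * q) : D / (K - D) = q - 1 := by
  nth_rw 1 [eq_sub_mul_pred_of_eq_sub_mul hDK hq]
  exact Nat.mul_div_cancel_left _ (Nat.sub_pos_of_lt hDK)

theorem mul_add_div_sub_of_eq_sub_mul (hDK : D < K) (hq : K = (K - D) * q) (M : ℕ) :
    (M * K + D) / (K - D) = M * q + (q - 1) := by
  nth_rw 1 [eq_sub_mul_pred_of_eq_sub_mul hDK hq, hq]
  rw [show M * ((K - D) * q) + (K - D) * (q - 1) = (K - D) * (M * q + (q - 1)) by ring]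
  exact Nat.mul_div_cancel_left _ (Nat.sub_pos_of_lt hDK)

end

theorem lift_sub_dvd {K D : ℕ} (hdvd : K - D ∣ K) (m : ℕ) :
    m * K - ((m - 1) * K + D) ∣ m * K := by
  rcases m with _ | m
  · simp
  · rw [Nat.add_sub_cancel, add_mul, one_mul, Nat.add_sub_add_left]
    exact (hdvd.mul_left m).add hdvd

theorem caseII_closed_under_lifting_general (K D m : ℕ)
    (hDK : D < K) (hdvd : (K - D) ∣ K) :
    (∀ k : ZMod (m * K),
      ({x | ∃ i : ℕ, 1 ≤ i ∧ i ≤ m - 1 ∧ x = k + (i * K : ℕ)} ∪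
        {x | ∃ p i : ℕ, 1 ≤ p ∧ p ≤ D / (K - D) ∧ i ≤ m - 1 ∧
          x = k + (p * (K - D) + i * K : ℕ)}) =
      {x | ∃ j : ℕ, 1 ≤ j ∧ j ≤ ((m - 1) * K + D) / (K - D) ∧
        x = k + (j * (K - D) : ℕ)}) ∧
    (m * K - ((m - 1) * K + D)) ∣ (m * K) := by
  obtain ⟨q, hq⟩ := hdvd
  have hq0 : 0 < q := Nat.pos_of_mul_pos_left (hq ▸ Nat.zero_lt_of_lt hDK)
  refine ⟨fun k => ?_, lift_sub_dvd ⟨q, hq⟩ m⟩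
  rw [div_sub_of_eq_sub_mul hDK hq, mul_add_div_sub_of_eq_sub_mul hDK hq]
  have hlift := lift_union_eq_setOf_multiples (fun n : ℕ => k + (n : ZMod (m * K)))
    (c := K - D) (m - 1) hq0
  rwa [← hq] at hlift

/-- **Proposition 2 (Case II is closed under lifting).** If `K - D ∣ K` then the lifted
antidote pattern (with parameter `m`) of the problem with `K` messages and antidotes
`A_k = {k + j(K-D) : 1 ≤ j ≤ D/(K-D)}` coincides with the antidote pattern of the same
class with parameters `K' = mK` and `D' = (m-1)K + D`, and `K' - D'` divides `K'`. -/
theorem caseII_closed_under_lifting (K D m : ℕ) (hK : 0 < K) (hm : 0 < m) (hD : 0 < D)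
    (hDK : D < K) (hdvd : (K - D) ∣ K) :
    (∀ k : ZMod (m * K),
      ({x | ∃ i : ℕ, 1 ≤ i ∧ i ≤ m - 1 ∧ x = k + (i * K : ℕ)} ∪
        {x | ∃ p i : ℕ, 1 ≤ p ∧ p ≤ D / (K - D) ∧ i ≤ m - 1 ∧
          x = k + (p * (K - D) + i * K : ℕ)}) =
      {x | ∃ j : ℕ, 1 ≤ j ∧ j ≤ ((m - 1) * K + D) / (K - D) ∧
        x = k + (j * (K - D) : ℕ)}) ∧
    (m * K - ((m - 1) * K + D)) ∣ (m * K) :=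
  caseII_closed_under_lifting_general K D m hDK hdvd
end

section
/- Let K, D, λ, m be positive integers with 0 < D < K, K − D + λ dividing K, and λ dividing K − D. For a pair (K̃, D̃) with K̃ − D̃ = K − D and K̃ − D̃ + λ dividing K̃, define S(K̃, D̃) := { aλ + (a−1)(K̃−D̃) : 1 ≤ a ≤ p̃ } ∪ { aλ + a(K̃−D̃) : 1 ≤ a ≤ p̃ − 1 } where p̃ = K̃/(K̃−D̃+λ). Then, with K' = mK and D' = (m−1)K + D, one has K' − D' + λ divides K', and for every k ∈ ZMod (mK) the set identity {k + iK : 1 ≤ i ≤ m−1} ∪ {k + s + iK : s ∈ S(K, D), 0 ≤ i ≤ m−1} = {k + s' : s' ∈ S(K', D')} holds in ZMod (mK). Consequently, the lift with parameter m of the index coding problem with K messages and antidotes A_k = {k + s : s ∈ S(K, D)} is exactly the problem of the same class with parameters K' and D'. -/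
/-- The antidote-offset set of the Case VIII class for parameters `(K̃, D̃)` (and fixed
`λ`): `S(K̃,D̃) = {aλ + (a-1)(K̃-D̃) : 1 ≤ a ≤ p̃} ∪ {aλ + a(K̃-D̃) : 1 ≤ a ≤ p̃-1}` where
`p̃ = K̃/(K̃-D̃+λ)`. -/
def offsetSet (lam Kt Dt : ℕ) : Set ℕ :=
  {s | ∃ a : ℕ, 1 ≤ a ∧ a ≤ Kt / (Kt - Dt + lam) ∧ s = a * lam + (a - 1) * (Kt - Dt)} ∪
  {s | ∃ a : ℕ, 1 ≤ a ∧ a ≤ Kt / (Kt - Dt + lam) - 1 ∧ s = a * lam + a * (Kt - Dt)}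

/-!
With `g = K - D` and `p = K / (g + λ)`, the two families of offsets are `a λ + (a - 1) g` and
`a (λ + g)`, and `K = p (g + λ)`. Both are affine in `a` with the same slope `g + λ`, so shifting
`a` by a multiple `i p` shifts the offset by `i K`. Writing every `a ≤ m p` as `i p + r` with
`i < m` and `r` in a single block of length `p` therefore splits `S(mK, D')` into the `m`
translates `S(K, D) + i K`, except that the type-2 offsets with `r = 0` are the multiples `i K`.
-/

namespace CaseVIII

def typeOne (lam g n : ℕ) : Set ℕ := {s | ∃ a, 1 ≤ a ∧ a ≤ n ∧ s = a * lam + (a - 1) * g}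

def typeTwo (lam g n : ℕ) : Set ℕ := {s | ∃ a, 1 ≤ a ∧ a ≤ n ∧ s = a * lam + a * g}

theorem offsetSet_eq_typeOne_union_typeTwo (lam Kt Dt : ℕ) :
    offsetSet lam Kt Dt = typeOne lam (Kt - Dt) (Kt / (Kt - Dt + lam)) ∪
      typeTwo lam (Kt - Dt) (Kt / (Kt - Dt + lam) - 1) := rfl

theorem exists_eq_mul_add_of_lt {p m a : ℕ} (hp : 0 < p) (ha : a < m * p) :
    ∃ i r, i < m ∧ r < p ∧ a = i * p + r :=
  ⟨a / p, a % p, (Nat.div_lt_iff_lt_mul hp).2 ha, Nat.mod_lt a hp,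
    by rw [mul_comm]; exact (Nat.div_add_mod a p).symm⟩

theorem exists_eq_mul_add_of_le {p m a : ℕ} (hp : 0 < p) (ha1 : 1 ≤ a) (ha : a ≤ m * p) :
    ∃ i r, i < m ∧ 1 ≤ r ∧ r ≤ p ∧ a = i * p + r := by
  obtain ⟨i, r, hi, hr, h⟩ := exists_eq_mul_add_of_lt (m := m) (a := a - 1) hp (by omega)
  exact ⟨i, r + 1, hi, by omega, hr, by omega⟩

theorem mul_add_le_mul_of_lt {i m r p : ℕ} (hi : i < m) (hr : r ≤ p) : i * p + r ≤ m * p := by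
  nlinarith

section Lifting

variable {lam g p m : ℕ}

theorem typeOne_shift (i : ℕ) {r : ℕ} (hr : 1 ≤ r) :
    (i * p + r) * lam + (i * p + r - 1) * g = r * lam + (r - 1) * g + i * (p * (g + lam)) := by
  obtain ⟨c, rfl⟩ : ∃ c, r = c + 1 := ⟨r - 1, by omega⟩
  rw [show i * p + (c + 1) - 1 = i * p + c by omega, Nat.add_sub_cancel]
  ring

theorem typeTwo_shift (i r : ℕ) :
    (i * p + r) * lam + (i * p + r) * g = r * lam + r * g + i * (p * (g + lam)) := by
  ring

theorem lift_typeOne (hp : 0 < p) :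
    {n | ∃ s ∈ typeOne lam g p, ∃ i < m, n = s + i * (p * (g + lam))} = typeOne lam g (m * p) := by
  ext n
  constructor
  · rintro ⟨_, ⟨r, hr1, hrp, rfl⟩, i, hi, rfl⟩
    exact ⟨i * p + r, by omega, mul_add_le_mul_of_lt hi hrp, (typeOne_shift i hr1).symm⟩
  · rintro ⟨a, ha1, ha, rfl⟩
    obtain ⟨i, r, hi, hr1, hrp, rfl⟩ := exists_eq_mul_add_of_le hp ha1 ha
    exact ⟨_, ⟨r, hr1, hrp, rfl⟩, i, hi, typeOne_shift i hr1⟩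

theorem lift_typeTwo (hp : 0 < p) :
    {n | ∃ i, 1 ≤ i ∧ i < m ∧ n = i * (p * (g + lam))} ∪
        {n | ∃ s ∈ typeTwo lam g (p - 1), ∃ i < m, n = s + i * (p * (g + lam))} =
      typeTwo lam g (m * p - 1) := by
  ext n
  constructor
  · rintro (⟨i, hi1, hi, rfl⟩ | ⟨_, ⟨r, hr1, hrp, rfl⟩, i, hi, rfl⟩)
    · have := mul_add_le_mul_of_lt hi hp
      refine ⟨i * p, Nat.one_le_iff_ne_zero.2 (by positivity), by omega, ?_⟩
      simpa using (typeTwo_shift i 0).symm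
    · have := mul_add_le_mul_of_lt hi (show r + 1 ≤ p by omega)
      exact ⟨i * p + r, by omega, by omega, (typeTwo_shift i r).symm⟩
  · rintro ⟨a, ha1, ha, rfl⟩
    obtain ⟨i, r, hi, hrp, rfl⟩ := exists_eq_mul_add_of_lt (m := m) (a := a) hp (by omega)
    rcases Nat.eq_zero_or_pos r with rfl | hr1
    · refine Or.inl ⟨i, Nat.pos_of_ne_zero (by rintro rfl; simp at ha1), hi, ?_⟩
      simpa using typeTwo_shift (lam := lam) (g := g) i 0
    · exact Or.inr ⟨_, ⟨r, hr1, by omega, rfl⟩, i, hi, typeTwo_shift i r⟩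

end Lifting

theorem lift_sub_eq {K D m : ℕ} (hm : 0 < m) (hDK : D ≤ K) :
    m * K - ((m - 1) * K + D) = K - D := by
  have := Nat.sub_one_mul m K
  have := Nat.le_mul_of_pos_left K hm
  omega

theorem lift_offsetSet {K D lam m : ℕ} (hK : 0 < K) (hm : 0 < m) (hDK : D ≤ K)
    (hdvd : K - D + lam ∣ K) :
    {n | ∃ i, 1 ≤ i ∧ i < m ∧ n = i * K} ∪ {n | ∃ s ∈ offsetSet lam K D, ∃ i < m, n = s + i * K} =
      offsetSet lam (m * K) ((m - 1) * K + D) := by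
  rw [offsetSet_eq_typeOne_union_typeTwo, offsetSet_eq_typeOne_union_typeTwo, lift_sub_eq hm hDK]
  generalize K - D = g at hdvd ⊢
  obtain ⟨p, rfl⟩ : ∃ p, K = p * (g + lam) := ⟨K / (g + lam), (Nat.div_mul_cancel hdvd).symm⟩
  have hp : 0 < p := Nat.pos_of_ne_zero (by rintro rfl; simp at hK)
  have ht : 0 < g + lam := Nat.pos_of_ne_zero (by intro h; simp [h] at hK)
  rw [Nat.mul_div_cancel p ht, ← mul_assoc, Nat.mul_div_cancel _ ht, ← lift_typeOne hp,
    ← lift_typeTwo hp, Set.union_left_comm]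
  simp only [Set.mem_union, or_and_right, exists_or, Set.ofPred_or]

end CaseVIII

theorem caseVIII_closed_under_lifting_general (K D lam m : ℕ) (hK : 0 < K)
    (hm : 0 < m) (hDK : D < K)
    (hdvd1 : (K - D + lam) ∣ K) :
    (m * K - ((m - 1) * K + D) + lam) ∣ (m * K) ∧
    ∀ k : ZMod (m * K),
      ({x | ∃ i : ℕ, 1 ≤ i ∧ i ≤ m - 1 ∧ x = k + (i * K : ℕ)} ∪
        {x | ∃ s ∈ offsetSet lam K D, ∃ i : ℕ, i ≤ m - 1 ∧
          x = k + (s + i * K : ℕ)}) =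
      {x | ∃ s' ∈ offsetSet lam (m * K) ((m - 1) * K + D), x = k + (s' : ZMod (m * K))} := by
  refine ⟨by rw [CaseVIII.lift_sub_eq hm hDK.le]; exact hdvd1.trans (dvd_mul_left K m), fun k => ?_⟩
  ext x
  simp only [← CaseVIII.lift_offsetSet hK hm hDK.le hdvd1, Set.mem_union, Set.mem_ofPred_eq,
    Nat.le_sub_one_iff_lt hm]
  aesop

/-- **Proposition 3 (Case VIII is closed under lifting).** If `K - D + λ ∣ K` and
`λ ∣ K - D` then, with `K' = mK` and `D' = (m-1)K + D`, one has `K' - D' + λ ∣ K'`, and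
the lifted antidote pattern of the problem with antidote offsets `S(K,D)` coincides with
the antidote pattern of the same class with parameters `K'` and `D'`. -/
theorem caseVIII_closed_under_lifting (K D lam m : ℕ) (hK : 0 < K) (hD : 0 < D)
    (hlam : 0 < lam) (hm : 0 < m) (hDK : D < K)
    (hdvd1 : (K - D + lam) ∣ K) (hdvd2 : lam ∣ (K - D)) :
    (m * K - ((m - 1) * K + D) + lam) ∣ (m * K) ∧
    ∀ k : ZMod (m * K),
      ({x | ∃ i : ℕ, 1 ≤ i ∧ i ≤ m - 1 ∧ x = k + (i * K : ℕ)} ∪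
        {x | ∃ s ∈ offsetSet lam K D, ∃ i : ℕ, i ≤ m - 1 ∧
          x = k + (s + i * K : ℕ)}) =
      {x | ∃ s' ∈ offsetSet lam (m * K) ((m - 1) * K + D), x = k + (s' : ZMod (m * K))} :=
  caseVIII_closed_under_lifting_general K D lam m hK hm hDK hdvd1
end

section
/- Let K, D, λ, m be positive integers with λ dividing D, D dividing K − λ, and n := (K − λ)/D > 1. Consider the index coding problem with mK messages where, writing each k ∈ ZMod (mK) with representative whose residue modulo K has representative k̄ ∈ {1, …, K}: if k̄ ≤ K − D − λ then A'_k = {k + iK : 1 ≤ i ≤ m−1} ∪ {k + D + iK : 0 ≤ i ≤ m−1}, and if K − D − λ < k̄ ≤ K then A'_k = {k + iK : 1 ≤ i ≤ m−1} ∪ {k + jλ + iK : 1 ≤ j ≤ D/λ, 0 ≤ i ≤ m−1}. Then the set C^(m) = { e'_{i+(j−1)D} + e'_{i+jD} : 1 ≤ i ≤ D, 1 ≤ j ≤ n−1 } ∪ { Σ_{t=0}^{D/λ} e'_{K−λ+r−tλ} : 1 ≤ r ≤ λ }, where e'_l = Σ_{t=0}^{m−1} e_{l+tK} ∈ V_{mK},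 is a valid scalar linear index code of length K − D for this problem, and moreover every valid scalar linear index code for this problem has length at least K − D. -/
/-- The representative in `{1, …, K}` of the residue modulo `K` of `k ∈ ZMod n`. -/
def resIdx (n K : ℕ) (k : ZMod n) : ℕ := if k.val % K = 0 then K else k.val % K

/-- Lifted antidote pattern of Class (ii): for `k` with residue index `k̄ ≤ K - D - λ`
the antidotes are `{k+iK : 1 ≤ i ≤ m-1} ∪ {k+D+iK : 0 ≤ i ≤ m-1}`; otherwise they are
`{k+iK : 1 ≤ i ≤ m-1} ∪ {k+jλ+iK : 1 ≤ j ≤ D/λ, 0 ≤ i ≤ m-1}`. -/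
def classiiA (K D lam m : ℕ) (k : ZMod (m * K)) : Set (ZMod (m * K)) :=
  if resIdx (m * K) K k ≤ K - D - lam then
    {x | ∃ i : ℕ, 1 ≤ i ∧ i ≤ m - 1 ∧ x = k + (i * K : ℕ)} ∪
    {x | ∃ i : ℕ, i ≤ m - 1 ∧ x = k + (D + i * K : ℕ)}
  else
    {x | ∃ i : ℕ, 1 ≤ i ∧ i ≤ m - 1 ∧ x = k + (i * K : ℕ)} ∪
    {x | ∃ j i : ℕ, 1 ≤ j ∧ j ≤ D / lam ∧ i ≤ m - 1 ∧ x = k + (j * lam + i * K : ℕ)}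

/-- The lifted code of Class (ii) (Corollary 5), with `n = (K - λ)/D`. -/
def codeClassii (K D lam m : ℕ) : Set (ZMod (m * K) → ZMod 2) :=
  {v | ∃ i j : ℕ, 1 ≤ i ∧ i ≤ D ∧ 1 ≤ j ∧ j ≤ (K - lam) / D - 1 ∧
    v = eSum K m (i + (j - 1) * D) + eSum K m (i + j * D)} ∪
  {v | ∃ r : ℕ, 1 ≤ r ∧ r ≤ lam ∧
    v = ∑ t ∈ Finset.range (D / lam + 1), eSum K m (K - lam + r - t * lam)}

/-!
Each receiver `k`, with residue `v` modulo `K`, knows `e_{k+iK}` for `1 ≤ i < m`, so it decodes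
once `e'_v` lies in the span of the code and its side information. For `v ≤ K - D - λ` the
codeword `e'_v + e'_{v+D}` and the known `e'_{v+D}` give it. Otherwise `k` knows `e'_{v+tλ}` for
`1 ≤ t ≤ D/λ`, and the run `Σ_{t ≤ D/λ} e'_{v+tλ}` is in the span of the code: it is a codeword
for `v ≤ K - D`, and the later runs are reached by shifting, since `e'` is `K`-periodic and the
pair codewords telescope.

Conversely, receivers `1, …, K - D` only know messages of larger index or outside this range,
so they induce an acyclic subgraph of the side-information graph, and its size bounds the
length of every code from below.
-/

open Submodule

lemma stdVec_eq_basisFun (n : ℕ) [NeZero n] : stdVec n = Pi.basisFun (ZMod 2) (ZMod n) := by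
  ext j i
  simp [stdVec, Pi.single_apply]

/-- The maximum acyclic induced subgraph bound, with `f` a topological order on `B`. -/
theorem IsIndexCode.ncard_le_ncard {n : ℕ} [NeZero n] {A : ZMod n → Set (ZMod n)}
    {C : Set (ZMod n → ZMod 2)} (hC : IsIndexCode n A C) {B : Set (ZMod n)} (f : ZMod n → ℕ)
    (hf : ∀ x ∈ B, ∀ y ∈ A x, y ∈ B → f y < f x) : B.ncard ≤ C.ncard := by
  set E := stdVec n '' Bᶜ
  set T := span (ZMod 2) (C ∪ E)
  have hmem : ∀ x, stdVec n x ∈ T := by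
    intro x
    induction hx : f x using Nat.strong_induction_on generalizing x with
    | _ N ih =>
    by_cases hxB : x ∈ B
    · refine span_le.2 (Set.union_subset (subset_span.trans (span_mono Set.subset_union_left)) ?_)
        (hC.2 x)
      rintro _ ⟨y, hy, rfl⟩
      by_cases hyB : y ∈ B
      · exact ih _ (hx ▸ hf x hxB y hy hyB) y rfl
      · exact subset_span (Or.inr ⟨y, hyB, rfl⟩)
    · exact subset_span (Or.inr ⟨x, hxB, rfl⟩)
  have htop : T = ⊤ := eq_top_iff.2 <| by
    rw [← (Pi.basisFun (ZMod 2) (ZMod n)).span_eq, ← stdVec_eq_basisFun]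
    exact span_le.2 (Set.range_subset_iff.2 hmem)
  have := (hC.1.union (Set.toFinite E)).fintype
  have hdim : n ≤ (C ∪ E).ncard :=
    calc n = Module.finrank (ZMod 2) T := by
          rw [htop, finrank_top, Module.finrank_fintype_fun_eq_card, ZMod.card]
      _ ≤ (C ∪ E).ncard := (finrank_span_le_card _).trans (Set.ncard_eq_toFinset_card' _).ge
  have hCE := Set.ncard_union_le C E
  have hE : E.ncard ≤ Bᶜ.ncard := Set.ncard_image_le (Set.toFinite _)
  have hB := Set.ncard_add_ncard_compl B
  rw [Nat.card_zmod] at hB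
  omega

lemma resIdx_modEq (n K : ℕ) (k : ZMod n) : resIdx n K k ≡ k.val [MOD K] := by
  unfold resIdx Nat.ModEq
  split_ifs with h
  · rw [Nat.mod_self, h]
  · exact Nat.mod_mod _ _

lemma one_le_resIdx {K : ℕ} (hK : 0 < K) (n : ℕ) (k : ZMod n) : 1 ≤ resIdx n K k := by
  unfold resIdx
  split_ifs <;> omega

lemma resIdx_le {K : ℕ} (hK : 0 < K) (n : ℕ) (k : ZMod n) : resIdx n K k ≤ K := by
  unfold resIdx
  split_ifs
  · exact le_rfl
  · exact (Nat.mod_lt _ hK).le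

section eSum

variable {K m : ℕ}

lemma eSum_add_self (l : ℕ) : eSum K m (l + K) = eSum K m l := by
  set g : ℕ → ZMod (m * K) → ZMod 2 := fun t => stdVec (m * K) ((l + t * K : ℕ))
  have hshift : eSum K m (l + K) = ∑ t ∈ Finset.range m, g (t + 1) :=
    Finset.sum_congr rfl fun t _ => by simp only [g]; congr 2; ring
  have hwrap : g m = g 0 := by
    simp only [g]
    rw [Nat.cast_add, ZMod.natCast_self, zero_mul, add_zero, add_zero]
  have h := (Finset.sum_range_succ' g m).symm.trans (Finset.sum_range_succ g m)
  rw [hwrap] at h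
  rw [hshift]
  exact add_right_cancel h

lemma eSum_mod (l : ℕ) : eSum K m (l % K) = eSum K m l := by
  conv_rhs => rw [← Nat.mod_add_div' l K]
  induction l / K with
  | zero => simp
  | succ j ih => rw [Nat.succ_mul, ← add_assoc, eSum_add_self, ih]

lemma eSum_eq_of_modEq {a b : ℕ} (h : a ≡ b [MOD K]) : eSum K m a = eSum K m b := by
  rw [← eSum_mod a, ← eSum_mod b, show a % K = b % K from h]

lemma eSum_add_eq_sum_stdVec [NeZero (m * K)] {v : ℕ} {k : ZMod (m * K)}
    (hv : v ≡ k.val [MOD K]) (c : ℕ) :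
    eSum K m (v + c) =
      ∑ i ∈ Finset.range m, stdVec (m * K) (k + ((c + i * K : ℕ) : ZMod (m * K))) := by
  rw [eSum_eq_of_modEq (hv.add_right c)]
  refine Finset.sum_congr rfl fun i _ => ?_
  push_cast
  rw [ZMod.natCast_zmod_val, add_assoc]

end eSum

section codeClassii

variable {K D lam m : ℕ}

lemma eSum_add_eSum_mem_codeClassii (hD : 0 < D) (hdvd : D ∣ K - lam) {v : ℕ} (hv : 1 ≤ v)
    (hvD : v + D ≤ K - lam) : eSum K m v + eSum K m (v + D) ∈ codeClassii K D lam m := by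
  obtain ⟨n, hn⟩ := hdvd
  have hdiv : (v - 1) / D < n - 1 := by
    rw [Nat.div_lt_iff_lt_mul hD, Nat.sub_one_mul, mul_comm]
    omega
  have hmod := Nat.mod_add_div' (v - 1) D
  have hsucc : ((v - 1) / D + 1) * D = (v - 1) / D * D + D := add_one_mul _ _
  refine Or.inl ⟨(v - 1) % D + 1, (v - 1) / D + 1, Nat.le_add_left _ _, Nat.mod_lt _ hD,
    Nat.le_add_left _ _, ?_, ?_⟩
  · rw [hn, Nat.mul_div_cancel_left _ hD]
    omega
  rw [Nat.add_sub_cancel, hsucc]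
  congr 2 <;> omega

lemma eSum_add_eSum_add_mul_mem_span (hD : 0 < D) (hdvd : D ∣ K - lam) {v : ℕ} (hv : 1 ≤ v)
    (u : ℕ) (hvu : v + u * D ≤ K - lam) :
    eSum K m v + eSum K m (v + u * D) ∈ span (ZMod 2) (codeClassii K D lam m) := by
  induction u with
  | zero => simp [CharTwo.add_self_eq_zero]
  | succ u ih =>
    rw [add_one_mul] at hvu
    rw [add_one_mul, ← add_assoc]
    have hstep := eSum_add_eSum_mem_codeClassii (m := m) hD hdvd (v := v + u * D) (by omega)
      (by omega)
    have := add_mem (ih (by omega)) (subset_span hstep)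
    rwa [add_assoc, CharTwo.add_cancel_left] at this

/-- Shifting the run down by `λ` changes it by `e'_{v-λ} + e'_{v+D-K}`, a telescoped pair
since `(v + D - K) + (n - 1)D = v - λ` when `K - λ = nD`. -/
lemma sum_eSum_mem_span (hD : 0 < D) (hlam : 0 < lam) (hdvd1 : lam ∣ D) (hdvd2 : D ∣ K - lam)
    (hDK : D + lam ≤ K) {v : ℕ} (hv : K - D - lam < v) (hvK : v ≤ K) :
    ∑ t ∈ Finset.range (D / lam + 1), eSum K m (v + t * lam) ∈
      span (ZMod 2) (codeClassii K D lam m) := by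
  obtain ⟨q, hq⟩ := hdvd1
  have hqD : D / lam = q := by rw [hq, Nat.mul_div_cancel_left _ hlam]
  rw [hqD]
  induction v using Nat.strong_induction_on with
  | _ v ih =>
  by_cases hvD : v ≤ K - D
  · refine subset_span (Or.inr ⟨v + D + lam - K, by omega, by omega, ?_⟩)
    rw [hqD, ← Finset.sum_range_reflect]
    refine Finset.sum_congr rfl fun t ht => congrArg _ ?_
    have htq : t ≤ q := Finset.mem_range_succ_iff.1 ht
    have hsub : (q - t) * lam = D - t * lam := by rw [Nat.sub_mul, hq, mul_comm]
    have htD : t * lam ≤ D := hq ▸ mul_comm q lam ▸ Nat.mul_le_mul_right lam htq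
    rw [Nat.add_sub_cancel, hsub]
    omega
  · obtain ⟨n, hn⟩ := hdvd2
    have hnD : (n - 1) * D = K - lam - D := by rw [Nat.sub_one_mul, mul_comm, hn]
    have hpair := eSum_add_eSum_add_mul_mem_span (m := m) hD ⟨n, hn⟩ (v := v + D - K)
      (by omega) (n - 1) (by omega)
    rw [show v + D - K + (n - 1) * D = v - lam by omega] at hpair
    have hwrap : eSum K m (v + q * lam) = eSum K m (v + D - K) := by
      rw [← eSum_add_self (v + D - K),
        show v + D - K + K = v + q * lam by rw [mul_comm, ← hq]; omega]
    have hprev : ∑ t ∈ Finset.range (q + 1), eSum K m (v - lam + t * lam) =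
        ∑ t ∈ Finset.range q, eSum K m (v + t * lam) + eSum K m (v - lam) := by
      rw [Finset.sum_range_succ']
      congr 1
      · exact Finset.sum_congr rfl fun t _ => by rw [add_one_mul]; congr 1; omega
      · simp
    have := add_mem (ih (v - lam) (by omega) (by omega) (by omega)) hpair
    rwa [hprev, add_assoc, add_comm (eSum K m (v + D - K)), CharTwo.add_cancel_left, ← hwrap,
      ← Finset.sum_range_succ] at this

theorem isIndexCode_codeClassii (hm : 0 < m) (hD : 0 < D) (hlam : 0 < lam) (hdvd1 : lam ∣ D)
    (hdvd2 : D ∣ K - lam) (hDK : D + lam ≤ K) :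
    IsIndexCode (m * K) (classiiA K D lam m) (codeClassii K D lam m) := by
  have hK : 0 < K := by omega
  have : NeZero (m * K) := ⟨(Nat.mul_pos hm hK).ne'⟩
  refine ⟨Set.toFinite _, fun k => ?_⟩
  set A := classiiA K D lam m k
  set T := span (ZMod 2) (codeClassii K D lam m ∪ stdVec (m * K) '' A)
  set v := resIdx (m * K) K k
  have hv1 := one_le_resIdx hK (m * K) k
  have hvK := resIdx_le hK (m * K) k
  have hant : ∀ c : ℕ, (∀ i < m, k + ((c + i * K : ℕ) : ZMod (m * K)) ∈ A) →
      eSum K m (v + c) ∈ T := fun c hc => by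
    rw [eSum_add_eq_sum_stdVec (resIdx_modEq _ _ k) c]
    exact sum_mem fun i hi => subset_span (Or.inr ⟨_, hc i (Finset.mem_range.1 hi), rfl⟩)
  have hcode : span (ZMod 2) (codeClassii K D lam m) ≤ T := span_mono Set.subset_union_left
  -- `e'_v = e_k + Σ_{1 ≤ i < m} e_{k+iK}`, and the `e_{k+iK}` are side information
  have hrest : ∑ i ∈ (Finset.range m).erase 0,
      stdVec (m * K) (k + ((0 + i * K : ℕ) : ZMod (m * K))) ∈ T := by
    refine sum_mem fun i hi => subset_span (Or.inr ⟨_, ?_, rfl⟩)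
    obtain ⟨hi0, him⟩ := Finset.mem_erase.1 hi
    rw [Finset.mem_range] at him
    rw [zero_add]
    unfold A classiiA
    split_ifs <;> exact Or.inl ⟨i, by omega, by omega, rfl⟩
  rw [← Submodule.add_mem_iff_left T hrest]
  convert_to eSum K m (v + 0) ∈ T
  · rw [eSum_add_eq_sum_stdVec (resIdx_modEq _ _ k),
      ← Finset.add_sum_erase _ _ (Finset.mem_range.2 hm)]
    simp
  by_cases hcase : v ≤ K - D - lam
  · refine (Submodule.add_mem_iff_left T (hant D fun i hi => ?_)).1
      (subset_span (Or.inl (eSum_add_eSum_mem_codeClassii hD hdvd2 hv1 (by omega))))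
    unfold A classiiA
    rw [if_pos hcase]
    exact Or.inr ⟨i, by omega, rfl⟩
  · have hrun := hcode (sum_eSum_mem_span (m := m) hD hlam hdvd1 hdvd2 hDK (by omega) hvK)
    rw [← Finset.add_sum_erase _ _ (Finset.mem_range.2 (Nat.succ_pos _)), zero_mul] at hrun
    refine (Submodule.add_mem_iff_left T (sum_mem fun t ht => hant _ fun i hi => ?_)).1 hrun
    obtain ⟨ht0, htq⟩ := Finset.mem_erase.1 ht
    rw [Finset.mem_range] at htq
    unfold A classiiA
    rw [if_neg hcase]
    exact Or.inr ⟨t, i, by omega, by omega, by omega, rfl⟩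

lemma ncard_codeClassii_le : (codeClassii K D lam m).ncard ≤ D * ((K - lam) / D - 1) + lam := by
  have hsub : codeClassii K D lam m ⊆
      (fun p : ℕ × ℕ => eSum K m (p.1 + (p.2 - 1) * D) + eSum K m (p.1 + p.2 * D)) ''
        (Set.Icc 1 D ×ˢ Set.Icc 1 ((K - lam) / D - 1)) ∪
      (fun r => ∑ t ∈ Finset.range (D / lam + 1), eSum K m (K - lam + r - t * lam)) ''
        Set.Icc 1 lam := by
    rintro _ (⟨i, j, hi1, hi2, hj1, hj2, rfl⟩ | ⟨r, hr1, hr2, rfl⟩)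
    · exact Or.inl ⟨(i, j), ⟨⟨hi1, hi2⟩, hj1, hj2⟩, rfl⟩
    · exact Or.inr ⟨r, ⟨hr1, hr2⟩, rfl⟩
  calc _ ≤ _ := Set.ncard_le_ncard hsub ((Set.toFinite _).union (Set.toFinite _))
    _ ≤ _ := Set.ncard_union_le _ _
    _ ≤ _ := add_le_add (Set.ncard_image_le (Set.toFinite _))
      (Set.ncard_image_le (Set.toFinite _))
    _ = _ := by rw [Set.ncard_prod]; simp

lemma exists_eq_add_of_mem_classiiA (hK : 0 < K) (hD : 0 < D) (hlam : 0 < lam)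
    {x y : ZMod (m * K)} (hy : y ∈ classiiA K D lam m x) :
    ∃ c : ℕ, 0 < c ∧ c ≤ D + (m - 1) * K ∧ y = x + c := by
  have hmul : ∀ i ≤ m - 1, i * K ≤ (m - 1) * K := fun i hi => Nat.mul_le_mul_right K hi
  unfold classiiA at hy
  split_ifs at hy
  · rcases hy with ⟨i, hi1, hi, rfl⟩ | ⟨i, hi, rfl⟩
    · exact ⟨i * K, Nat.mul_pos hi1 hK, (hmul i hi).trans (Nat.le_add_left _ _), rfl⟩
    · exact ⟨D + i * K, by omega, Nat.add_le_add_left (hmul i hi) D, rfl⟩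
  · rcases hy with ⟨i, hi1, hi, rfl⟩ | ⟨j, i, hj1, hj, hi, rfl⟩
    · exact ⟨i * K, Nat.mul_pos hi1 hK, (hmul i hi).trans (Nat.le_add_left _ _), rfl⟩
    · have hjD : j * lam ≤ D := (Nat.mul_le_mul_right lam hj).trans (Nat.div_mul_le_self D lam)
      exact ⟨j * lam + i * K, by have := Nat.mul_pos hj1 hlam; omega,
        Nat.add_le_add hjD (hmul i hi), rfl⟩

theorem le_ncard_of_isIndexCode_classiiA (hm : 0 < m) (hK : 0 < K) (hD : 0 < D)
    (hlam : 0 < lam) {C : Set (ZMod (m * K) → ZMod 2)}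
    (hC : IsIndexCode (m * K) (classiiA K D lam m) C) : K - D ≤ C.ncard := by
  have : NeZero (m * K) := ⟨(Nat.mul_pos hm hK).ne'⟩
  have hmK : (m - 1) * K + K = m * K := by
    rw [Nat.sub_one_mul]; have := Nat.le_mul_of_pos_left K hm; omega
  set B : Set (ZMod (m * K)) := ZMod.val ⁻¹' Set.Icc 1 (K - D)
  have hB : B.ncard = K - D := by
    rw [Set.ncard_preimage_of_injective_subset_range (ZMod.val_injective _), Set.ncard_Icc_nat]
    · omega
    · exact fun l hl => ⟨l, ZMod.val_cast_of_lt (by have := hl.2; omega)⟩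
  refine hB ▸ hC.ncard_le_ncard (fun x => m * K - x.val) ?_
  rintro x ⟨hx1, hx2⟩ y hy ⟨hy1, -⟩
  obtain ⟨c, hc0, hc, rfl⟩ := exists_eq_add_of_mem_classiiA hK hD hlam hy
  have hval : (x + (c : ZMod (m * K))).val = (x.val + c) % (m * K) := by
    rw [← ZMod.val_natCast, Nat.cast_add, ZMod.natCast_zmod_val]
  rw [hval] at hy1 ⊢
  rcases (show x.val + c ≤ m * K by omega).lt_or_eq with hlt | heq
  · rw [Nat.mod_eq_of_lt hlt]; omega
  · rw [heq, Nat.mod_self] at hy1; omega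

end codeClassii

theorem lifted_code_class_ii_general (K D lam m : ℕ)
    (hm : 0 < m) (hdvd1 : lam ∣ D) (hdvd2 : D ∣ (K - lam)) (hn : 1 < (K - lam) / D) :
    (IsIndexCode (m * K) (classiiA K D lam m) (codeClassii K D lam m) ∧
      (codeClassii K D lam m).ncard = K - D) ∧
    (∀ C' : Set (ZMod (m * K) → ZMod 2),
      IsIndexCode (m * K) (classiiA K D lam m) C' → K - D ≤ C'.ncard) := by
  have hD : 0 < D := Nat.pos_of_ne_zero fun h => by simp [h] at hn
  have hlam : 0 < lam := Nat.pos_of_dvd_of_pos hdvd1 hD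
  obtain ⟨n, hKn⟩ := id hdvd2
  rw [hKn, Nat.mul_div_cancel_left _ hD] at hn
  have hDn : D ≤ D * n := Nat.le_mul_of_pos_right D (by omega)
  have hcode := isIndexCode_codeClassii hm hD hlam hdvd1 hdvd2 (by omega)
  have hlower : ∀ C', IsIndexCode (m * K) (classiiA K D lam m) C' → K - D ≤ C'.ncard :=
    fun C' => le_ncard_of_isIndexCode_classiiA hm (by omega) hD hlam
  refine ⟨⟨hcode, le_antisymm ?_ (hlower _ hcode)⟩, hlower⟩
  calc _ ≤ D * ((K - lam) / D - 1) + lam := ncard_codeClassii_le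
    _ = K - D := by rw [hKn, Nat.mul_div_cancel_left _ hD, Nat.mul_sub_one]; omega

/-- **Class (ii) lifted (Corollary 5).** For `λ ∣ D`, `D ∣ K - λ` and
`n = (K - λ)/D > 1`, the lifted code is a valid scalar linear index code of optimal
length `K - D` for the lifted Class (ii) problem on `m*K` messages. -/
theorem lifted_code_class_ii (K D lam m : ℕ) (hK : 0 < K) (hD : 0 < D) (hlam : 0 < lam)
    (hm : 0 < m) (hdvd1 : lam ∣ D) (hdvd2 : D ∣ (K - lam)) (hn : 1 < (K - lam) / D) :
    (IsIndexCode (m * K) (classiiA K D lam m) (codeClassii K D lam m) ∧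
      (codeClassii K D lam m).ncard = K - D) ∧
    (∀ C' : Set (ZMod (m * K) → ZMod 2),
      IsIndexCode (m * K) (classiiA K D lam m) C' → K - D ≤ C'.ncard) :=
  lifted_code_class_ii_general K D lam m hm hdvd1 hdvd2 hn
end
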